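/- arXiv:1504.04657 — 9 statements merged into one kernel-verified Lean document; each statement's English description precedes it below -/
import Mathlib

section
/- Let n ≥ 2. For every w ∈ S_∞^(n) with w ∉ S_n (i.e. w(j) ≠ j for some j > n), the Schubert polynomial 𝔖_w lies in the ideal I of ℤ[x_1,…,x_n] generated by the symmetric polynomials of positive degree. -/
open MvPolynomial

/-- The length (number of inversions) of a finitely-supported permutation of `ℕ`. -/
noncomputable def permLenN (w : Equiv.Perm ℕ) : ℕ :=
  Set.ncard {p : ℕ × ℕ | p.1 < p.2 ∧ w p.2 < w p.1}

/-- `w ∈ S_∞^(n)` (0-indexed positions and values): `w` is a permutation of `ℕ`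
moving only finitely many points and increasing on positions `≥ n` (1-indexed:
`w(n+1) < w(n+2) < ⋯`). -/
def SInf (n : ℕ) (w : Equiv.Perm ℕ) : Prop :=
  {i | w i ≠ i}.Finite ∧ ∀ i, n ≤ i → w i < w (i + 1)

/-- The ideal of `ℤ[x_1,…,x_n]` generated by the symmetric polynomials of positive
degree, equivalently by the elementary symmetric polynomials `e_1, …, e_n`. -/
noncomputable def symIdeal (n : ℕ) : Ideal (MvPolynomial (Fin n) ℤ) :=
  Ideal.span {f | ∃ k : ℕ, 0 < k ∧ k ≤ n ∧ f = MvPolynomial.esymm (Fin n) ℤ k}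

/-!
If `w` is dominant, `𝔖_w` is a monomial, and since `w ∉ S_n` some `w(i)` with `i < n` is at
least `n`, so `x_i ^ n` divides it; `x_i ^ n ∈ I` because `x_i` is a root of
`∏ₖ (t - xₖ) = ∑ₖ (-1)ᵏ eₖ tⁿ⁻ᵏ`. Otherwise `w` has an ascent `w(i) < w(i+1)` with `i + 1 < n`,
and `w' = w sᵢ` is longer, so `(xᵢ - xᵢ₊₁) 𝔖_w = 𝔖_w' - sᵢ 𝔖_w'`. As `I` is generated by
symmetric polynomials, `g - sᵢ g ∈ (xᵢ - xᵢ₊₁) I` for every `g ∈ I`, and cancelling the factor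
shows `𝔖_w ∈ I` once `𝔖_w' ∈ I`. The induction is on `∑_{k<n} k·w(k)`, which strictly
decreases when an ascent among the first `n` positions is sorted.
-/

namespace MvPolynomial

variable {R σ : Type*} [CommRing R]

theorem X_sub_X_dvd_sub_rename_swap [DecidableEq σ] (i j : σ) (f : MvPolynomial σ R) :
    X i - X j ∣ f - rename (Equiv.swap i j) f := by
  let q := Ideal.Quotient.mkₐ R (Ideal.span {(X i - X j : MvPolynomial σ R)})
  have hij : q (X i) = q (X j) :=
    Ideal.Quotient.eq.2 (Ideal.subset_span rfl)
  have hq : q.comp (rename (Equiv.swap i j)) = q := by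
    ext k
    simp only [AlgHom.comp_apply, rename_X, Equiv.swap_apply_def]
    split_ifs with hki hkj
    · rw [hki, hij]
    · rw [hkj, hij]
    · rfl
  rw [← Ideal.mem_span_singleton, ← Ideal.Quotient.eq]
  exact (congrArg (· f) hq).symm

theorem exists_mem_span_sub_rename_swap_eq [DecidableEq σ] {s : Set (MvPolynomial σ R)}
    (i j : σ) (hs : ∀ f ∈ s, rename (Equiv.swap i j) f = f) {g : MvPolynomial σ R}
    (hg : g ∈ Ideal.span s) :
    ∃ h ∈ Ideal.span s, g - rename (Equiv.swap i j) g = (X i - X j) * h := by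
  obtain ⟨m, c, b, rfl⟩ := Submodule.mem_span_set'.1 hg
  choose q hq using fun k => X_sub_X_dvd_sub_rename_swap i j (c k)
  refine ⟨∑ k, q k * b k,
    Ideal.sum_mem _ fun k _ => Ideal.mul_mem_left _ _ (Ideal.subset_span (b k).2), ?_⟩
  simp only [smul_eq_mul, map_sum, map_mul, Finset.mul_sum, ← Finset.sum_sub_distrib]
  refine Finset.sum_congr rfl fun k _ => ?_
  rw [hs _ (b k).2, ← sub_mul, hq, mul_assoc]

theorem mem_span_of_X_sub_X_mul_eq_sub_rename_swap [IsDomain R] [DecidableEq σ]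
    {s : Set (MvPolynomial σ R)} {i j : σ} (hij : i ≠ j)
    (hs : ∀ f ∈ s, rename (Equiv.swap i j) f = f) {f g : MvPolynomial σ R}
    (hg : g ∈ Ideal.span s) (hfg : (X i - X j) * f = g - rename (Equiv.swap i j) g) :
    f ∈ Ideal.span s := by
  obtain ⟨h, hh, hgh⟩ := exists_mem_span_sub_rename_swap_eq i j hs hg
  rwa [mul_left_cancel₀ (sub_ne_zero.2 ((X_injective (R := R)).ne hij)) (hfg.trans hgh)]

theorem X_pow_card_mem_span_esymm [Fintype σ] (i : σ) :
    X i ^ Fintype.card σ ∈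
      Ideal.span {f : MvPolynomial σ R | ∃ k, 0 < k ∧ k ≤ Fintype.card σ ∧
        f = esymm σ R k} := by
  set I := Ideal.span
    {f : MvPolynomial σ R | ∃ k, 0 < k ∧ k ≤ Fintype.card σ ∧ f = esymm σ R k}
  have hvieta := congrArg (Polynomial.eval (-X i)) (prod_C_add_X_eq_sum_esymm R σ)
  rw [Polynomial.eval_prod, Finset.prod_eq_zero (Finset.mem_univ i) (by simp),
    Polynomial.eval_finsetSum, Finset.sum_range_succ'] at hvieta
  simp only [Polynomial.eval_mul, Polynomial.eval_C, Polynomial.eval_pow, Polynomial.eval_X,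
    esymm_zero, one_mul, Nat.sub_zero] at hvieta
  have hneg : (-X i : MvPolynomial σ R) ^ Fintype.card σ ∈ I := by
    rw [eq_neg_of_add_eq_zero_right hvieta.symm]
    refine neg_mem (Ideal.sum_mem _ fun k hk => Ideal.mul_mem_right _ _ (Ideal.subset_span ?_))
    exact ⟨k + 1, k.succ_pos, Finset.mem_range.1 hk, rfl⟩
  have hsign : (-1) ^ Fintype.card σ * (-X i) ^ Fintype.card σ =
      (X i : MvPolynomial σ R) ^ Fintype.card σ := by
    rw [← mul_pow, neg_one_mul, neg_neg]
  exact hsign ▸ Ideal.mul_mem_left _ _ hneg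

end MvPolynomial

namespace Equiv.Perm

variable {w : Equiv.Perm ℕ}

theorem exists_forall_ge_apply_eq_self (hw : {k | w k ≠ k}.Finite) :
    ∃ N, ∀ k, N ≤ k → w k = k := by
  obtain ⟨N, hN⟩ := hw.bddAbove
  exact ⟨N + 1, fun k hk => by_contra fun h => by have := hN h; omega⟩

theorem apply_lt_of_forall_ge_apply_eq_self {N : ℕ} (hN : ∀ k, N ≤ k → w k = k) {k : ℕ}
    (hk : k < N) : w k < N := by
  by_contra! h
  have := w.injective (hN _ h)
  omega

theorem finite_mul_swap_ne_self (hw : {k | w k ≠ k}.Finite) (i j : ℕ) :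
    {k | (w * Equiv.swap i j) k ≠ k}.Finite := by
  refine (hw.union (Set.toFinite {i, j})).subset fun k hk => ?_
  by_cases hkij : k = i ∨ k = j
  · exact Or.inr (by simpa using hkij)
  · push Not at hkij
    exact Or.inl (by simpa [Equiv.swap_apply_of_ne_of_ne hkij.1 hkij.2] using hk)

theorem finite_inversions (hw : {k | w k ≠ k}.Finite) :
    {p : ℕ × ℕ | p.1 < p.2 ∧ w p.2 < w p.1}.Finite := by
  obtain ⟨N, hN⟩ := exists_forall_ge_apply_eq_self hw
  refine ((Set.finite_Iio N).prod (Set.finite_Iio N)).subset ?_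
  rintro ⟨p, q⟩ ⟨hpq, hinv⟩
  dsimp only at hpq hinv
  have hq : q < N := by
    by_contra! hq
    rw [hN q hq] at hinv
    rcases lt_or_ge p N with hp | hp
    · have := apply_lt_of_forall_ge_apply_eq_self hN hp
      omega
    · rw [hN p hp] at hinv
      omega
  exact ⟨hpq.trans hq, hq⟩

theorem swap_succ_apply_lt_swap_succ_apply {i p q : ℕ} (hpq : p < q)
    (hne : ¬(p = i ∧ q = i + 1)) :
    Equiv.swap i (i + 1) p < Equiv.swap i (i + 1) q := by
  simp only [Equiv.swap_apply_def]
  split_ifs <;> omega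

theorem permLenN_lt_mul_swap (hw : {k | w k ≠ k}.Finite) {i : ℕ} (hasc : w i < w (i + 1)) :
    permLenN w < permLenN (w * Equiv.swap i (i + 1)) := by
  set s := Equiv.swap i (i + 1)
  have himage : Prod.map s s '' {p : ℕ × ℕ | p.1 < p.2 ∧ w p.2 < w p.1} ⊂
      {p : ℕ × ℕ | p.1 < p.2 ∧ (w * s) p.2 < (w * s) p.1} := by
    refine (Set.ssubset_iff_of_subset ?_).2 ⟨(i, i + 1), ?_, ?_⟩
    · rintro _ ⟨⟨p, q⟩, ⟨hpq, hinv⟩, rfl⟩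
      dsimp only at hpq hinv
      refine ⟨swap_succ_apply_lt_swap_succ_apply hpq ?_, by simpa [s] using hinv⟩
      rintro ⟨rfl, rfl⟩
      omega
    · simpa [s] using hasc
    · rintro ⟨⟨p, q⟩, ⟨hpq, -⟩, hpq'⟩
      simp only [Prod.map, Prod.mk.injEq, s, Equiv.swap_apply_eq_iff, Equiv.swap_apply_left,
        Equiv.swap_apply_right] at hpq'
      omega
  rw [permLenN, permLenN, ← Set.ncard_image_of_injective _
    (Prod.map_injective.2 ⟨s.injective, s.injective⟩)]
  exact Set.ncard_lt_ncard himage (finite_inversions (finite_mul_swap_ne_self hw i (i + 1)))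

end Equiv.Perm

theorem SInf.mul_swap {n : ℕ} {w : Equiv.Perm ℕ} (hw : SInf n w) {i : ℕ} (hin : i + 1 < n) :
    SInf n (w * Equiv.swap i (i + 1)) := by
  refine ⟨Equiv.Perm.finite_mul_swap_ne_self hw.1 i (i + 1), fun k hk => ?_⟩
  have hk0 : Equiv.swap i (i + 1) k = k := Equiv.swap_apply_of_ne_of_ne (by omega) (by omega)
  have hk1 : Equiv.swap i (i + 1) (k + 1) = k + 1 :=
    Equiv.swap_apply_of_ne_of_ne (by omega) (by omega)
  simpa only [Equiv.Perm.mul_apply, hk0, hk1] using hw.2 k hk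

theorem SInf.exists_lt_le_apply {n : ℕ} {w : Equiv.Perm ℕ} (hw : SInf n w)
    (hwn : ∃ k, n ≤ k ∧ w k ≠ k) : ∃ i < n, n ≤ w i := by
  by_contra! hlt
  have hsurj : Function.Surjective fun k : Fin n => (⟨w k, hlt k k.2⟩ : Fin n) :=
    Finite.injective_iff_surjective.1 fun a b hab => Fin.ext (w.injective (Fin.mk.inj hab))
  have hge : ∀ k, n ≤ k → n ≤ w k := fun k hk => by
    by_contra! hk'
    obtain ⟨j, hj⟩ := hsurj ⟨w k, hk'⟩
    have := w.injective (Fin.mk.inj hj)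
    omega
  have hself : ∀ k, n ≤ k → k ≤ w k := fun k hk => by
    induction k, hk using Nat.le_induction with
    | base => exact hge n le_rfl
    | succ k hk ih => have := hw.2 k hk; omega
  obtain ⟨j, hj, hjne⟩ := hwn
  have hmoved : ∀ m, j ≤ m → m < w m := fun m hm => by
    induction m, hm using Nat.le_induction with
    | base => exact (hself j hj).lt_of_ne (Ne.symm hjne)
    | succ m hm ih => have := hw.2 m (hj.trans hm); omega
  obtain ⟨N, hN⟩ := Equiv.Perm.exists_forall_ge_apply_eq_self hw.1
  have := hmoved (max j N) (le_max_left _ _)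
  rw [hN _ (le_max_right _ _)] at this
  exact lt_irrefl _ this

def positionWeight (n : ℕ) (w : Equiv.Perm ℕ) : ℕ :=
  ∑ k ∈ Finset.range n, k * w k

theorem positionWeight_mul_swap_lt {n i : ℕ} {w : Equiv.Perm ℕ} (hin : i + 1 < n)
    (hasc : w i < w (i + 1)) :
    positionWeight n (w * Equiv.swap i (i + 1)) < positionWeight n w := by
  have hi : i ∈ (Finset.range n).erase (i + 1) := by simp; omega
  have hrest : ∀ k ∈ ((Finset.range n).erase (i + 1)).erase i,
      k * (w * Equiv.swap i (i + 1)) k = k * w k := fun k hk => by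
    simp only [Finset.mem_erase] at hk
    rw [Equiv.Perm.mul_apply, Equiv.swap_apply_of_ne_of_ne hk.1 hk.2.1]
  rw [positionWeight, positionWeight, ← Finset.add_sum_erase _ _ (Finset.mem_range.2 hin),
    ← Finset.add_sum_erase _ _ hi, ← Finset.add_sum_erase _ _ (Finset.mem_range.2 hin),
    ← Finset.add_sum_erase _ _ hi, Finset.sum_congr rfl hrest]
  simp only [Equiv.Perm.mul_apply, Equiv.swap_apply_left, Equiv.swap_apply_right]
  nlinarith

theorem prod_X_pow_mem_symIdeal {n : ℕ} {e : Fin n → ℕ} {i : Fin n} (hi : n ≤ e i) :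
    ∏ k, X k ^ e k ∈ symIdeal n := by
  have hdvd : (X i : MvPolynomial (Fin n) ℤ) ^ n ∣ ∏ k, X k ^ e k :=
    (pow_dvd_pow _ hi).trans (Finset.dvd_prod_of_mem (fun k => X k ^ e k) (Finset.mem_univ i))
  refine Ideal.mem_of_dvd _ hdvd ?_
  simpa [symIdeal] using X_pow_card_mem_span_esymm (R := ℤ) i

theorem mem_symIdeal_of_X_sub_X_mul_eq {n : ℕ} {i j : Fin n} (hij : i ≠ j)
    {f g : MvPolynomial (Fin n) ℤ} (hg : g ∈ symIdeal n)
    (hfg : (X i - X j) * f = g - rename (Equiv.swap i j) g) : f ∈ symIdeal n :=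
  mem_span_of_X_sub_X_mul_eq_sub_rename_swap hij
    (by rintro _ ⟨k, -, -, rfl⟩; exact rename_esymm _ _ _ _) hg hfg

theorem stmt1_general (n : ℕ)
    (𝔖 : Equiv.Perm ℕ → MvPolynomial (Fin n) ℤ)
    (hdom : ∀ w : Equiv.Perm ℕ, SInf n w → (∀ i : ℕ, i + 1 < n → w (i + 1) < w i) →
      𝔖 w = ∏ i : Fin n, X i ^ (w (i : ℕ)))
    (hrec : ∀ w : Equiv.Perm ℕ, SInf n w → ∀ i j : Fin n, (j : ℕ) = (i : ℕ) + 1 →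
      permLenN (w * Equiv.swap (i : ℕ) (j : ℕ)) < permLenN w →
      (X i - X j) * 𝔖 (w * Equiv.swap (i : ℕ) (j : ℕ)) =
        𝔖 w - rename (Equiv.swap i j) (𝔖 w))
    (w : Equiv.Perm ℕ) (hw : SInf n w) (hwn : ∃ i, n ≤ i ∧ w i ≠ i) :
    𝔖 w ∈ symIdeal n := by
  induction hm : positionWeight n w using Nat.strong_induction_on generalizing w with
  | _ m ih =>
  by_cases hdesc : ∀ i : ℕ, i + 1 < n → w (i + 1) < w i
  · obtain ⟨i, hin, hi⟩ := hw.exists_lt_le_apply hwn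
    rw [hdom w hw hdesc]
    exact prod_X_pow_mem_symIdeal (i := ⟨i, hin⟩) hi
  push Not at hdesc
  obtain ⟨i, hin, hle⟩ := hdesc
  have hasc : w i < w (i + 1) := hle.lt_of_ne (w.injective.ne (by omega))
  set w' := w * Equiv.swap i (i + 1)
  have hw'w : w' * Equiv.swap i (i + 1) = w := by simp [w', mul_assoc]
  have hw' : SInf n w' := hw.mul_swap hin
  have hwn' : ∃ k, n ≤ k ∧ w' k ≠ k := by
    obtain ⟨k, hk, hwk⟩ := hwn
    have hsk : Equiv.swap i (i + 1) k = k := Equiv.swap_apply_of_ne_of_ne (by omega) (by omega)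
    exact ⟨k, hk, by rwa [Equiv.Perm.mul_apply, hsk]⟩
  have hlen : permLenN (w' * Equiv.swap i (i + 1)) < permLenN w' :=
    hw'w ▸ Equiv.Perm.permLenN_lt_mul_swap hw.1 hasc
  have hrec' := hrec w' hw' ⟨i, by omega⟩ ⟨i + 1, hin⟩ rfl hlen
  rw [hw'w] at hrec'
  have hIH : 𝔖 w' ∈ symIdeal n :=
    ih _ (hm ▸ positionWeight_mul_swap_lt hin hasc) w' hw' hwn' rfl
  exact mem_symIdeal_of_X_sub_X_mul_eq (by simp) hIH hrec'

/-- for any family `(𝔖_w)_{w ∈ S_∞^(n)}` of polynomials in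
`ℤ[x_1,…,x_n]` satisfying the defining laws of Schubert polynomials (the monomial
formula in the dominant case `w(1) > ⋯ > w(n)`, and the divided-difference
recursion for `1 ≤ i ≤ n-1`), every `w ∈ S_∞^(n) ∖ S_n` has `𝔖_w ∈ I`.
Everything is 0-indexed: position/value `i` stands for `i+1`, the variable `X i`
is `x_{i+1}`, and `w ∉ S_n` means `w i ≠ i` for some `i ≥ n`. -/
theorem stmt1 (n : ℕ) (hn : 2 ≤ n)
    (𝔖 : Equiv.Perm ℕ → MvPolynomial (Fin n) ℤ)
    (hdom : ∀ w : Equiv.Perm ℕ, SInf n w → (∀ i : ℕ, i + 1 < n → w (i + 1) < w i) →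
      𝔖 w = ∏ i : Fin n, X i ^ (w (i : ℕ)))
    (hrec : ∀ w : Equiv.Perm ℕ, SInf n w → ∀ i j : Fin n, (j : ℕ) = (i : ℕ) + 1 →
      permLenN (w * Equiv.swap (i : ℕ) (j : ℕ)) < permLenN w →
      (X i - X j) * 𝔖 (w * Equiv.swap (i : ℕ) (j : ℕ)) =
        𝔖 w - rename (Equiv.swap i j) (𝔖 w))
    (w : Equiv.Perm ℕ) (hw : SInf n w) (hwn : ∃ i, n ≤ i ∧ w i ≠ i) :
    𝔖 w ∈ symIdeal n :=
  stmt1_general n 𝔖 hdom hrec w hw hwn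
end

section
/- Divided differences preserve the ideal I: let 1 ≤ i ≤ n−1 and let f, g ∈ ℤ[x_1,…,x_n] satisfy (x_i − x_{i+1})·g = f − s_i(f). If f ∈ I then g ∈ I. -/
open MvPolynomial

/-- `X i - X j` divides `c - (swap i j) c` for any polynomial `c`. -/
lemma dvd_sub_rename_swap {n : ℕ} (i j : Fin n) (c : MvPolynomial (Fin n) ℤ) :
    (X i - X j) ∣ c - rename (Equiv.swap i j) c := by
  induction c using MvPolynomial.induction_on with
  | C a => simp
  | add p q hp hq =>
    have : p + q - rename (Equiv.swap i j) (p + q)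
        = (p - rename (Equiv.swap i j) p) + (q - rename (Equiv.swap i j) q) := by
      rw [map_add]; ring
    rw [this]; exact dvd_add hp hq
  | mul_X p k hp =>
    have : p * X k - rename (Equiv.swap i j) (p * X k)
        = (p - rename (Equiv.swap i j) p) * X k
          + rename (Equiv.swap i j) p * (X k - X (Equiv.swap i j k)) := by
      rw [map_mul, rename_X]; ring
    rw [this]
    refine dvd_add (Dvd.dvd.mul_right hp _) (Dvd.dvd.mul_left ?_ _)
    rcases eq_or_ne k i with rfl | hki
    · rw [Equiv.swap_apply_left]
    rcases eq_or_ne k j with rfl | hkj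
    · rw [Equiv.swap_apply_right]
      exact ⟨-1, by ring⟩
    · rw [Equiv.swap_apply_of_ne_of_ne hki hkj, sub_self]
      exact dvd_zero _

/-- divided differences preserve the ideal `I`.  Here `i, j` are
adjacent (0-indexed) variable indices, `s_i` is realized as `rename (Equiv.swap i j)`,
and the hypothesis `(x_i - x_j) * g = f - s_i f` says `g = ∂_i f`. -/
theorem stmt3 (n : ℕ) (hn : 2 ≤ n) (i j : Fin n) (hij : (j : ℕ) = (i : ℕ) + 1)
    (f g : MvPolynomial (Fin n) ℤ)
    (h : (X i - X j) * g = f - rename (Equiv.swap i j) f)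
    (hf : f ∈ symIdeal n) : g ∈ symIdeal n := by
  have key : ∀ p ∈ symIdeal n, ∃ h ∈ symIdeal n,
      p - rename (Equiv.swap i j) p = (X i - X j) * h := by
    intro p hp
    refine Submodule.span_induction ?_ ?_ ?_ ?_ hp
    · rintro x ⟨k, hk0, hkn, rfl⟩
      exact ⟨0, Ideal.zero_mem _, by rw [rename_esymm]; ring⟩
    · exact ⟨0, Ideal.zero_mem _, by simp⟩
    · rintro x y hx hy ⟨a, ha, hax⟩ ⟨b, hb, hbx⟩
      refine ⟨a + b, Ideal.add_mem _ ha hb, ?_⟩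
      rw [map_add]
      rw [show x + y - (rename (Equiv.swap i j) x + rename (Equiv.swap i j) y)
        = (x - rename (Equiv.swap i j) x) + (y - rename (Equiv.swap i j) y) by ring,
        hax, hbx]; ring
    · rintro r x hx ⟨a, ha, hax⟩
      obtain ⟨d, hd⟩ := dvd_sub_rename_swap i j r
      refine ⟨rename (Equiv.swap i j) r * a + d * x, ?_, ?_⟩
      · exact Ideal.add_mem _ (Ideal.mul_mem_left _ _ ha)
          (Ideal.mul_mem_left _ _ (by exact hx))
      · have : r • x - rename (Equiv.swap i j) (r • x)
            = rename (Equiv.swap i j) r * (x - rename (Equiv.swap i j) x)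
              + (r - rename (Equiv.swap i j) r) * x := by
          simp only [smul_eq_mul, map_mul]; ring
        rw [this, hax, hd]; ring
  obtain ⟨h', hh', heq⟩ := key f hf
  have hne : (X i - X j : MvPolynomial (Fin n) ℤ) ≠ 0 := by
    refine sub_ne_zero.mpr ?_
    intro hXeq
    have := MvPolynomial.X_injective hXeq
    rw [this] at hij; omega
  have : g = h' := mul_left_cancel₀ hne (by rw [h, heq])
  rwa [this]
end

section
/- The staircase monomial is fixed modulo I by the sign-reversing automorphism: in ℤ[x_1,…,x_n], the polynomial ∏_{i=1}^{n} x_i^{n−i} − (−1)^{n(n−1)/2} ∏_{i=1}^{n} x_i^{i−1} lies in the ideal I. Equivalently, the image of x_1^{n−1}x_2^{n−2}⋯x_{n−1} under the ring automorphism x_j ↦ −x_{n+1−j} is congruent to x_1^{n−1}x_2^{n−2}⋯x_{n−1} modulo I. -/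
open MvPolynomial

/-!
Work in any commutative ring where `y₀, …, yₙ₋₁` have vanishing elementary symmetric functions
of positive degree, i.e. `∏ (X - yᵢ) = Xⁿ`; the quotient by `I` with `yᵢ = xᵢ` is the case at
hand. By downward induction on `k`, the tail monomial `Tₖ = ∏_{k ≤ i < n} yᵢ^i` still annihilates
the positive-degree elementary symmetric functions of `y₀, …, yₖ₋₁`: dividing
`Tₖ₊₁ ∏_{i ≤ k} (X - yᵢ) = Tₖ₊₁ X^(k+1)` by the monic `X - yₖ` gives
`Tₖ₊₁ ∏_{i < k} (X - yᵢ) = Tₖ₊₁ ∑ⱼ Xʲ yₖ^(k-j)` and `Tₖ₊₁ yₖ^(k+1) = 0`.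
The constant term of that identity, `Tₖ₊₁ yₖ^k = (-1)^k Tₖ₊₁ y₀ ⋯ yₖ₋₁`, is one step of a
chain from `∏ yᵢ^i` to the staircase `∏ yᵢ^(n-1-i)`, the `k`-th step contributing `(-1)^k`.
-/

section StaircaseIdentity

open Finset
open scoped Polynomial

variable {A : Type*} [CommRing A]

theorem mul_pow_succ_eq_zero_of_mul_X_sub_C_eq {F : A[X]} {a c : A} {m : ℕ}
    (h : F * (Polynomial.X - Polynomial.C a) = Polynomial.C c * Polynomial.X ^ (m + 1)) :
    c * a ^ (m + 1) = 0 := by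
  simpa using (congrArg (Polynomial.eval a) h).symm

theorem eq_C_mul_geom_sum₂_of_mul_X_sub_C_eq {F : A[X]} {a c : A} {m : ℕ}
    (h : F * (Polynomial.X - Polynomial.C a) = Polynomial.C c * Polynomial.X ^ (m + 1)) :
    F = Polynomial.C c * ∑ i ∈ range (m + 1), Polynomial.X ^ i * Polynomial.C a ^ (m - i) := by
  refine sub_eq_zero.mp ((Polynomial.monic_X_sub_C a).mul_left_eq_zero_iff.mp ?_)
  have hgeom := geom_sum₂_mul (Polynomial.X : A[X]) (Polynomial.C a) (m + 1)
  simp only [add_tsub_cancel_right] at hgeom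
  rw [sub_mul, h, mul_assoc, hgeom, mul_sub, ← Polynomial.C_pow, ← Polynomial.C_mul,
    mul_pow_succ_eq_zero_of_mul_X_sub_C_eq h, Polynomial.C_0, sub_zero, sub_self]

theorem prod_X_sub_C_eq_X_pow_of_esymm_eq_zero {σ : Type*} [Fintype σ] (f : σ → A)
    (hf : ∀ k, 0 < k → (univ.val.map f).esymm k = 0) :
    ∏ i, (Polynomial.X - Polynomial.C (f i)) = Polynomial.X ^ Fintype.card σ := by
  have hmap : univ.val.map (fun i => Polynomial.X - Polynomial.C (f i)) =
      (univ.val.map f).map (fun t => Polynomial.X - Polynomial.C t) := by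
    rw [Multiset.map_map]; rfl
  rw [prod_eq_multiset_prod, hmap, Multiset.prod_X_sub_X_eq_sum_esymm, sum_range_succ',
    sum_eq_zero fun j _ => by rw [hf (j + 1) j.succ_pos, Polynomial.C_0, zero_mul, mul_zero]]
  simp [Multiset.esymm, card_univ]

variable (y : ℕ → A) (n : ℕ)

def tailProd (k : ℕ) : A := ∏ i ∈ Ico k n, y i ^ i

def staircase (k : ℕ) : A := ∏ i ∈ range k, y i ^ (k - 1 - i)

variable {y n}

theorem tailProd_eq_pow_mul {k : ℕ} (hk : k < n) :
    tailProd y n k = y k ^ k * tailProd y n (k + 1) :=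
  prod_eq_prod_Ico_succ_bot hk _

theorem staircase_succ (k : ℕ) : staircase y (k + 1) = staircase y k * ∏ i ∈ range k, y i := by
  rw [staircase, prod_range_succ, add_tsub_cancel_right, tsub_self, pow_zero, mul_one, staircase,
    ← prod_mul_distrib]
  refine prod_congr rfl fun i hi => ?_
  rw [← pow_succ]
  congr 1
  have := mem_range.mp hi
  omega

theorem C_tailProd_mul_prod_X_sub_C
    (hy : ∏ i ∈ range n, (Polynomial.X - Polynomial.C (y i)) = Polynomial.X ^ n) {k : ℕ}
    (hk : k ≤ n) :
    Polynomial.C (tailProd y n k) * ∏ i ∈ range k, (Polynomial.X - Polynomial.C (y i)) =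
      Polynomial.C (tailProd y n k) * Polynomial.X ^ k := by
  induction hk using Nat.decreasingInduction with
  | self => simp [tailProd, hy]
  | of_succ k hk ih =>
    rw [prod_range_succ, ← mul_assoc] at ih
    have hroot : Polynomial.C (tailProd y n (k + 1)) * Polynomial.C (y k) ^ (k + 1) = 0 := by
      rw [← Polynomial.C_pow, ← Polynomial.C_mul, mul_pow_succ_eq_zero_of_mul_X_sub_C_eq ih,
        Polynomial.C_0]
    rw [tailProd_eq_pow_mul hk, Polynomial.C_mul, mul_assoc,
      eq_C_mul_geom_sum₂_of_mul_X_sub_C_eq ih, geom_sum₂_succ_eq, Polynomial.C_pow]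
    linear_combination
      (∑ i ∈ range k, Polynomial.X ^ i * Polynomial.C (y k) ^ (k - 1 - i)) * hroot

theorem tailProd_succ_mul_pow
    (hy : ∏ i ∈ range n, (Polynomial.X - Polynomial.C (y i)) = Polynomial.X ^ n) {k : ℕ}
    (hk : k < n) :
    tailProd y n (k + 1) * y k ^ k = tailProd y n (k + 1) * ((-1) ^ k * ∏ i ∈ range k, y i) := by
  have h := C_tailProd_mul_prod_X_sub_C hy hk
  rw [prod_range_succ, ← mul_assoc] at h
  have h0 := congrArg (Polynomial.eval 0) (eq_C_mul_geom_sum₂_of_mul_X_sub_C_eq h)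
  simpa [Polynomial.eval_prod, Polynomial.eval_finsetSum, prod_neg, sum_range_succ'] using h0.symm

theorem staircase_mul_tailProd
    (hy : ∏ i ∈ range n, (Polynomial.X - Polynomial.C (y i)) = Polynomial.X ^ n) {k : ℕ}
    (hk : k ≤ n) :
    staircase y k * tailProd y n k = (-1) ^ (k * (k - 1) / 2) * tailProd y n 0 := by
  induction k with
  | zero => simp [staircase]
  | succ k ih =>
    have hk' : k < n := hk
    have hsq : ((-1 : A) ^ k) ^ 2 = 1 := by rw [← pow_mul, pow_mul', neg_one_sq, one_pow]
    have ih' := ih hk'.le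
    rw [tailProd_eq_pow_mul hk'] at ih'
    rw [staircase_succ, Nat.triangle_succ, pow_add]
    linear_combination (-1) ^ k * ih' - (-1) ^ k * staircase y k * tailProd_succ_mul_pow hy hk' -
      staircase y k * (∏ i ∈ range k, y i) * tailProd y n (k + 1) * hsq

theorem prod_pow_sub_eq_neg_one_pow_mul_prod_pow
    (hy : ∏ i ∈ range n, (Polynomial.X - Polynomial.C (y i)) = Polynomial.X ^ n) :
    ∏ i ∈ range n, y i ^ (n - 1 - i) = (-1) ^ (n * (n - 1) / 2) * ∏ i ∈ range n, y i ^ i := by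
  have h := staircase_mul_tailProd hy le_rfl
  rwa [staircase, tailProd, Ico_self, prod_empty, mul_one, tailProd, ← range_eq_Ico] at h

end StaircaseIdentity

theorem esymm_mem_symIdeal {n k : ℕ} (hk : 0 < k) : esymm (Fin n) ℤ k ∈ symIdeal n := by
  rcases le_or_gt k n with hkn | hkn
  · exact Ideal.subset_span ⟨k, hk, hkn, rfl⟩
  · rw [esymm, Finset.powersetCard_eq_empty.mpr (by simpa using hkn), Finset.sum_empty]
    exact (symIdeal n).zero_mem

theorem esymm_map_mk_X_eq_zero {n k : ℕ} (hk : 0 < k) :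
    (Finset.univ.val.map fun i => Ideal.Quotient.mk (symIdeal n) (X i)).esymm k = 0 := by
  simp_rw [Finset.esymm_map_val, ← map_prod, ← map_sum]
  exact Ideal.Quotient.eq_zero_iff_mem.mpr (esymm_mem_symIdeal hk)

theorem stmt5_general (n : ℕ) :
    (∏ i : Fin n, (X i : MvPolynomial (Fin n) ℤ) ^ (n - 1 - (i : ℕ))) -
      (-1 : MvPolynomial (Fin n) ℤ) ^ (n * (n - 1) / 2) * ∏ i : Fin n, X i ^ (i : ℕ)
      ∈ symIdeal n := by
  let y : ℕ → MvPolynomial (Fin n) ℤ ⧸ symIdeal n := fun i =>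
    if h : i < n then Ideal.Quotient.mk _ (X ⟨i, h⟩) else 0
  have hy : ∏ i ∈ Finset.range n, (Polynomial.X - Polynomial.C (y i)) = Polynomial.X ^ n := by
    rw [← Fin.prod_univ_eq_prod_range]
    simpa [y] using prod_X_sub_C_eq_X_pow_of_esymm_eq_zero _ fun k => esymm_map_mk_X_eq_zero
  have h := prod_pow_sub_eq_neg_one_pow_mul_prod_pow hy
  rw [← Fin.prod_univ_eq_prod_range, ← Fin.prod_univ_eq_prod_range] at h
  rw [← Ideal.Quotient.eq_zero_iff_mem, map_sub, sub_eq_zero]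
  simpa [y] using h

/-- the staircase monomial is fixed modulo `I` by the sign-reversing
automorphism: `∏_{i=1}^n x_i^{n-i} - (-1)^{n(n-1)/2} ∏_{i=1}^n x_i^{i-1} ∈ I`
(0-indexed: variable `X i` is `x_{i+1}`). -/
theorem stmt5 (n : ℕ) (hn : 2 ≤ n) :
    (∏ i : Fin n, (X i : MvPolynomial (Fin n) ℤ) ^ (n - 1 - (i : ℕ))) -
      (-1 : MvPolynomial (Fin n) ℤ) ^ (n * (n - 1) / 2) * ∏ i : Fin n, X i ^ (i : ℕ)
      ∈ symIdeal n :=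
  stmt5_general n
end

section
/- Inversion set of a permutation after a length-increasing transposition: let w be a permutation of {1,…,n}, let 1 ≤ p < q ≤ n, and suppose ℓ(w t_{pq}) = ℓ(w) + 1. Set X = {r : q < r ≤ n, w(p) < w(r) < w(q)} and Y = {r : 1 ≤ r < p, w(p) < w(r) < w(q)}. Then Inv(w t_{pq}) = ( Inv(w) ∖ ( {(q,r) : r ∈ X} ∪ {(r,p) : r ∈ Y} ) ) ∪ {(p,r) : r ∈ X} ∪ {(r,q) : r ∈ Y} ∪ {(p,q)}. -/
/-- The inversion set of a permutation of `Fin n`. -/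
def invSet {n : ℕ} (w : Equiv.Perm (Fin n)) : Set (Fin n × Fin n) :=
  {x | x.1 < x.2 ∧ w x.2 < w x.1}

/-- The length (number of inversions) of a permutation of `Fin n`. -/
def permLen {n : ℕ} (w : Equiv.Perm (Fin n)) : ℕ :=
  (Finset.univ.filter fun p : Fin n × Fin n => p.1 < p.2 ∧ w p.2 < w p.1).card

namespace Stmt9Aux

variable {n : ℕ}

/-- forward map on inversion pairs -/
def tf (w : Equiv.Perm (Fin n)) (p q : Fin n) (x : Fin n × Fin n) : Fin n × Fin n :=
  if x.1 = q ∧ w p < w x.2 then (p, x.2)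
  else if x.2 = p ∧ w x.1 < w q then (x.1, q) else x

/-- backward map -/
def tg (w : Equiv.Perm (Fin n)) (p q : Fin n) (y : Fin n × Fin n) : Fin n × Fin n :=
  if y.1 = p ∧ q < y.2 ∧ w p < w y.2 then (q, y.2)
  else if y.2 = q ∧ y.1 < p ∧ w y.1 < w q then (y.1, p) else y

/-- the domain predicate -/
def Dmem (w : Equiv.Perm (Fin n)) (p q : Fin n) (x : Fin n × Fin n) : Prop :=
  (x.1 < x.2 ∧ w x.2 < w x.1) ∨ x = (p, q) ∨
    (x.1 = p ∧ p < x.2 ∧ x.2 < q ∧ w p < w x.2 ∧ w x.2 < w q) ∨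
    (x.2 = q ∧ p < x.1 ∧ x.1 < q ∧ w p < w x.1 ∧ w x.1 < w q)

lemma wlt (w : Equiv.Perm (Fin n)) {a b : Fin n} (hab : a ≠ b) (h : ¬ w a < w b) :
    w b < w a := by
  rcases lt_or_gt_of_ne (fun e : w a = w b => hab (w.injective e)) with h' | h'
  · exact absurd h' h
  · exact h'

lemma u_p (w : Equiv.Perm (Fin n)) (p q : Fin n) : (w * Equiv.swap p q) p = w q := by
  simp [Equiv.Perm.mul_apply]

lemma u_q (w : Equiv.Perm (Fin n)) (p q : Fin n) : (w * Equiv.swap p q) q = w p := by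
  simp [Equiv.Perm.mul_apply]

lemma u_other (w : Equiv.Perm (Fin n)) (p q i : Fin n) (h1 : i ≠ p) (h2 : i ≠ q) :
    (w * Equiv.swap p q) i = w i := by
  simp [Equiv.Perm.mul_apply, Equiv.swap_apply_of_ne_of_ne h1 h2]

lemma tf_mem (w : Equiv.Perm (Fin n)) (p q : Fin n) (hpq : p < q) (hw : w p < w q)
    {x : Fin n × Fin n} (hx : Dmem w p q x) :
    (tf w p q x).1 < (tf w p q x).2 ∧
      (w * Equiv.swap p q) (tf w p q x).2 < (w * Equiv.swap p q) (tf w p q x).1 := by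
  obtain ⟨i, j⟩ := x
  simp only [Dmem] at hx
  simp only [tf]
  split_ifs with h1 h2
  · -- i = q, w p < w j ; target (p, j)
    obtain ⟨h1a, h1b⟩ := h1
    rw [h1a] at hx
    have hqj : q < j ∧ w j < w q := by
      rcases hx with ⟨hlt, hv⟩ | he | ⟨ha, _⟩ | ⟨_, _, hc, _⟩
      · exact ⟨hlt, hv⟩
      · exact absurd (congrArg Prod.fst he) (ne_of_gt hpq)
      · exact absurd ha (ne_of_gt hpq)
      · exact absurd hc (lt_irrefl q)
    have hjp : j ≠ p := ne_of_gt (hpq.trans hqj.1)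
    have hjq : j ≠ q := ne_of_gt hqj.1
    refine ⟨hpq.trans hqj.1, ?_⟩
    show (w * Equiv.swap p q) j < (w * Equiv.swap p q) p
    rw [u_p, u_other w p q j hjp hjq]
    exact hqj.2
  · -- j = p, w i < w q ; target (i, q)
    obtain ⟨h2a, h2b⟩ := h2
    rw [h2a] at hx
    have hip : i < p ∧ w p < w i := by
      rcases hx with ⟨hlt, hv⟩ | he | ⟨_, hb, _⟩ | ⟨ha, _⟩
      · exact ⟨hlt, hv⟩
      · exact absurd (congrArg Prod.snd he) (ne_of_lt hpq)
      · exact absurd hb (lt_irrefl p)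
      · exact absurd ha (ne_of_lt hpq)
    refine ⟨hip.1.trans hpq, ?_⟩
    show (w * Equiv.swap p q) q < (w * Equiv.swap p q) i
    rw [u_q, u_other w p q i (ne_of_lt hip.1) (ne_of_lt (hip.1.trans hpq))]
    exact hip.2
  · -- identity branch
    rcases hx with ⟨hlt, hv⟩ | he | ⟨ha, hb, hc, hd, hee⟩ | ⟨ha, hb, hc, hd, hee⟩
    · refine ⟨hlt, ?_⟩
      show (w * Equiv.swap p q) j < (w * Equiv.swap p q) i
      by_cases hip : i = p
      · by_cases hjq : j = q
        · rw [hip, hjq, u_p, u_q]; exact hw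
        · have hjp : j ≠ p := by rw [← hip]; exact ne_of_gt hlt
          rw [hip, u_p, u_other w p q j hjp hjq]
          exact hv.trans (by rw [hip]; exact hw)
      · by_cases hiq : i = q
        · have hjp : j ≠ p := by
            intro e
            exact absurd (hiq ▸ e ▸ hlt) (not_lt.mpr (le_of_lt hpq))
          have hjq : j ≠ q := by rw [← hiq]; exact ne_of_gt hlt
          have hnj : ¬ w p < w j := fun h => h1 ⟨hiq, h⟩
          rw [hiq, u_q, u_other w p q j hjp hjq]
          exact wlt w (Ne.symm hjp) hnj
        · by_cases hjp : j = p
          · have hni : ¬ w i < w q := fun h => h2 ⟨hjp, h⟩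
            rw [hjp, u_p, u_other w p q i hip hiq]
            exact wlt w hiq hni
          · by_cases hjq : j = q
            · rw [hjq, u_q, u_other w p q i hip hiq]
              exact hw.trans (hjq ▸ hv)
            · rw [u_other w p q i hip hiq, u_other w p q j hjp hjq]
              exact hv
    · rw [he]
      refine ⟨hpq, ?_⟩
      show (w * Equiv.swap p q) q < (w * Equiv.swap p q) p
      rw [u_q, u_p]; exact hw
    · refine ⟨?_, ?_⟩
      · show i < j; rw [ha]; exact hb
      · show (w * Equiv.swap p q) j < (w * Equiv.swap p q) i
        rw [ha, u_p, u_other w p q j (ne_of_gt hb) (ne_of_lt hc)]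
        exact hee
    · refine ⟨?_, ?_⟩
      · show i < j; rw [ha]; exact hc
      · show (w * Equiv.swap p q) j < (w * Equiv.swap p q) i
        rw [ha, u_q, u_other w p q i (ne_of_gt hb) (ne_of_lt hc)]
        exact hd

lemma tg_tf (w : Equiv.Perm (Fin n)) (p q : Fin n) (hpq : p < q) (hw : w p < w q)
    {x : Fin n × Fin n} (hx : Dmem w p q x) : tg w p q (tf w p q x) = x := by
  obtain ⟨i, j⟩ := x
  simp only [Dmem] at hx
  simp only [tf]
  split_ifs with h1 h2
  · obtain ⟨h1a, h1b⟩ := h1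
    rw [h1a] at hx
    have hqj : q < j := by
      rcases hx with ⟨hlt, _⟩ | he | ⟨ha, _⟩ | ⟨_, _, hc, _⟩
      · exact hlt
      · exact absurd (congrArg Prod.fst he) (ne_of_gt hpq)
      · exact absurd ha (ne_of_gt hpq)
      · exact absurd hc (lt_irrefl q)
    unfold tg
    rw [if_pos ⟨rfl, hqj, h1b⟩, h1a]
  · obtain ⟨h2a, h2b⟩ := h2
    rw [h2a] at hx
    have hip : i < p := by
      rcases hx with ⟨hlt, _⟩ | he | ⟨_, hb, _⟩ | ⟨ha, _⟩
      · exact hlt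
      · exact absurd (congrArg Prod.snd he) (ne_of_lt hpq)
      · exact absurd hb (lt_irrefl p)
      · exact absurd ha (ne_of_lt hpq)
    unfold tg
    rw [if_neg, if_pos ⟨rfl, hip, h2b⟩, h2a]
    rintro ⟨ha, hb, -⟩
    exact absurd hb (lt_irrefl q)
  · unfold tg
    rw [if_neg, if_neg]
    · rintro ⟨ha, hb, hc⟩
      rw [show j = q from ha] at hx
      rcases hx with ⟨hlt, hv⟩ | he | ⟨_, _, hcc, _⟩ | ⟨_, hb2, _⟩
      · exact absurd ((hc : w i < w q).trans hv) (lt_irrefl (w i))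
      · exact absurd ((show i = p from congrArg Prod.fst he) ▸ (hb : i < p) : p < p) (lt_irrefl p)
      · exact absurd hcc (lt_irrefl q)
      · exact absurd (hb2.trans (hb : i < p)) (lt_irrefl p)
    · rintro ⟨ha, hb, hc⟩
      rw [show i = p from ha] at hx
      rcases hx with ⟨hlt, hv⟩ | he | ⟨_, _, hcc, _⟩ | ⟨_, hb2, _⟩
      · exact absurd ((hc : w p < w j).trans hv) (lt_irrefl (w p))
      · exact absurd ((show j = q from congrArg Prod.snd he) ▸ (hb : q < j) : q < q) (lt_irrefl q)
      · exact absurd ((hb : q < j).trans hcc) (lt_irrefl q)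
      · exact absurd hb2 (lt_irrefl p)

/-- If `w p < w q` then the length goes up by at least 1. -/
lemma len_lt (w : Equiv.Perm (Fin n)) (p q : Fin n) (hpq : p < q) (hw : w p < w q) :
    permLen w + 1 ≤ permLen (w * Equiv.swap p q) := by
  classical
  set A : Finset (Fin n × Fin n) :=
    Finset.univ.filter fun x : Fin n × Fin n => x.1 < x.2 ∧ w x.2 < w x.1 with hA
  set u := w * Equiv.swap p q with hu
  set B : Finset (Fin n × Fin n) :=
    Finset.univ.filter fun x : Fin n × Fin n => x.1 < x.2 ∧ u x.2 < u x.1 with hB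
  have hDmem : ∀ x ∈ insert (p, q) A, Dmem w p q x := by
    intro x hx
    rcases Finset.mem_insert.mp hx with h | h
    · exact Or.inr (Or.inl h)
    · exact Or.inl (Finset.mem_filter.mp h).2
  have hmaps : ∀ x ∈ insert (p, q) A, tf w p q x ∈ B := by
    intro x hx
    have := tf_mem w p q hpq hw (hDmem x hx)
    exact Finset.mem_filter.mpr ⟨Finset.mem_univ _, this⟩
  have hinj : Set.InjOn (tf w p q) (insert (p, q) A : Finset (Fin n × Fin n)) := by
    intro a ha b hb h
    have := tg_tf w p q hpq hw (hDmem a ha)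
    rw [← this, h, tg_tf w p q hpq hw (hDmem b hb)]
  have hcard := Finset.card_le_card_of_injOn (tf w p q) hmaps hinj
  have hpqA : (p, q) ∉ A := by
    intro h
    exact absurd ((Finset.mem_filter.mp h).2.2) (not_lt.mpr hw.le)
  rw [Finset.card_insert_of_notMem hpqA] at hcard
  simpa [permLen, hA, hB, hu] using hcard

/-- If in addition there is `r` strictly between, the length goes up by at least 3. -/
lemma len_lt3 (w : Equiv.Perm (Fin n)) (p q r : Fin n) (hpq : p < q) (hw : w p < w q)
    (h1 : p < r) (h2 : r < q) (h3 : w p < w r) (h4 : w r < w q) :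
    permLen w + 3 ≤ permLen (w * Equiv.swap p q) := by
  classical
  set A : Finset (Fin n × Fin n) :=
    Finset.univ.filter fun x : Fin n × Fin n => x.1 < x.2 ∧ w x.2 < w x.1 with hA
  set u := w * Equiv.swap p q with hu
  set B : Finset (Fin n × Fin n) :=
    Finset.univ.filter fun x : Fin n × Fin n => x.1 < x.2 ∧ u x.2 < u x.1 with hB
  set D : Finset (Fin n × Fin n) := insert (p, r) (insert (r, q) (insert (p, q) A)) with hD
  have hDmem : ∀ x ∈ D, Dmem w p q x := by
    intro x hx
    rcases Finset.mem_insert.mp hx with h | hx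
    · exact Or.inr (Or.inr (Or.inl (by rw [h]; exact ⟨rfl, h1, h2, h3, h4⟩)))
    rcases Finset.mem_insert.mp hx with h | hx
    · exact Or.inr (Or.inr (Or.inr (by rw [h]; exact ⟨rfl, h1, h2, h3, h4⟩)))
    rcases Finset.mem_insert.mp hx with h | hx
    · exact Or.inr (Or.inl h)
    · exact Or.inl (Finset.mem_filter.mp hx).2
  have hmaps : ∀ x ∈ D, tf w p q x ∈ B := by
    intro x hx
    have := tf_mem w p q hpq hw (hDmem x hx)
    exact Finset.mem_filter.mpr ⟨Finset.mem_univ _, this⟩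
  have hinj : Set.InjOn (tf w p q) (D : Finset (Fin n × Fin n)) := by
    intro a ha b hb h
    have := tg_tf w p q hpq hw (hDmem a ha)
    rw [← this, h, tg_tf w p q hpq hw (hDmem b hb)]
  have hcard := Finset.card_le_card_of_injOn (tf w p q) hmaps hinj
  have hmemA : ∀ x : Fin n × Fin n, x ∈ A ↔ x.1 < x.2 ∧ w x.2 < w x.1 := by
    intro x; simp [hA]
  have hpqA : (p, q) ∉ A := fun h => absurd ((hmemA _).mp h).2 (not_lt.mpr hw.le)
  have hrqA : (r, q) ∉ insert (p, q) A := by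
    intro h
    rcases Finset.mem_insert.mp h with h | h
    · exact absurd (congrArg Prod.fst h) (ne_of_gt h1)
    · exact absurd ((hmemA _).mp h).2 (not_lt.mpr h4.le)
  have hprA : (p, r) ∉ insert (r, q) (insert (p, q) A) := by
    intro h
    rcases Finset.mem_insert.mp h with h | h
    · exact absurd (congrArg Prod.fst h) (ne_of_lt h1)
    rcases Finset.mem_insert.mp h with h | h
    · exact absurd (congrArg Prod.snd h) (ne_of_lt h2)
    · exact absurd ((hmemA _).mp h).2 (not_lt.mpr h3.le)
  rw [hD] at hcard
  rw [Finset.card_insert_of_notMem hprA, Finset.card_insert_of_notMem hrqA,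
    Finset.card_insert_of_notMem hpqA] at hcard
  have : A.card + 3 ≤ B.card := by omega
  simpa [permLen, hA, hB, hu] using this

end Stmt9Aux

/-- the inversion set of a permutation after a length-increasing
transposition.  Here `w * Equiv.swap p q` is `w t_{pq}`,
`X = {r : q < r, w(p) < w(r) < w(q)}` and `Y = {r : r < p, w(p) < w(r) < w(q)}`, and
`Inv(w t_{pq}) = (Inv(w) ∖ ({(q,r) : r ∈ X} ∪ {(r,p) : r ∈ Y}))
  ∪ {(p,r) : r ∈ X} ∪ {(r,q) : r ∈ Y} ∪ {(p,q)}`. -/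
theorem stmt9 (n : ℕ) (w : Equiv.Perm (Fin n)) (p q : Fin n) (hpq : p < q)
    (hlen : permLen (w * Equiv.swap p q) = permLen w + 1) :
    invSet (w * Equiv.swap p q) =
      (invSet w \
          ((fun r => (q, r)) '' {r | q < r ∧ w p < w r ∧ w r < w q} ∪
            (fun r => (r, p)) '' {r | r < p ∧ w p < w r ∧ w r < w q})) ∪
        (fun r => (p, r)) '' {r | q < r ∧ w p < w r ∧ w r < w q} ∪
        (fun r => (r, q)) '' {r | r < p ∧ w p < w r ∧ w r < w q} ∪
        {(p, q)} := by
  have hne : p ≠ q := ne_of_lt hpq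
  have hw : w p < w q := by
    by_contra h
    have h' : w q < w p := Stmt9Aux.wlt w hne h
    have hv : (w * Equiv.swap p q) p < (w * Equiv.swap p q) q := by
      rw [Stmt9Aux.u_p, Stmt9Aux.u_q]; exact h'
    have hineq := Stmt9Aux.len_lt (w * Equiv.swap p q) p q hpq hv
    rw [show w * Equiv.swap p q * Equiv.swap p q = w by
      rw [mul_assoc, Equiv.swap_mul_self, mul_one]] at hineq
    omega
  have hbet : ∀ r : Fin n, p < r → r < q → w p < w r → w r < w q → False := by
    intro r h1 h2 h3 h4
    have := Stmt9Aux.len_lt3 w p q r hpq hw h1 h2 h3 h4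
    omega
  set u := w * Equiv.swap p q with hu
  have hup : u p = w q := Stmt9Aux.u_p w p q
  have huq : u q = w p := Stmt9Aux.u_q w p q
  have huo : ∀ i, i ≠ p → i ≠ q → u i = w i := fun i => Stmt9Aux.u_other w p q i
  ext ⟨i, j⟩
  simp only [invSet, Set.mem_setOf_eq, Set.mem_union, Set.mem_diff, Set.mem_image,
    Set.mem_singleton_iff, Prod.mk.injEq]
  constructor
  · rintro ⟨hij, hinv⟩
    by_cases hip : i = p
    · by_cases hjq : j = q
      · exact Or.inr ⟨hip, hjq⟩
      · have hjp : j ≠ p := by rw [← hip]; exact ne_of_gt hij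
        have hj : w j < w q := by
          rw [hip, hup, huo j hjp hjq] at hinv; exact hinv
        by_cases hjwp : w j < w p
        · refine Or.inl (Or.inl (Or.inl ⟨⟨hij, by rw [hip]; exact hjwp⟩, ?_⟩))
          rintro (⟨r, _, hqi, _⟩ | ⟨r, _, _, hpj⟩)
          · exact hne (hip ▸ hqi.symm)
          · exact hjp hpj.symm
        · have hwpj : w p < w j := Stmt9Aux.wlt w hjp hjwp
          have hqj : q < j := by
            rcases lt_or_gt_of_ne hjq with h | h
            · exact (hbet j (by rw [← hip]; exact hij) h hwpj hj).elim
            · exact h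
          exact Or.inl (Or.inl (Or.inr ⟨j, ⟨hqj, hwpj, hj⟩, hip.symm, rfl⟩))
    · by_cases hjq : j = q
      · have hiq : i ≠ q := by rw [← hjq]; exact ne_of_lt hij
        have hi : w p < w i := by
          rw [hjq, huq, huo i hip hiq] at hinv; exact hinv
        by_cases hwq : w q < w i
        · refine Or.inl (Or.inl (Or.inl ⟨⟨hij, by rw [hjq]; exact hwq⟩, ?_⟩))
          rintro (⟨r, _, hqi, _⟩ | ⟨r, _, _, hpj⟩)
          · exact hiq hqi.symm
          · exact hne (hpj.trans hjq)
        · have hiwq : w i < w q := Stmt9Aux.wlt w (Ne.symm hiq) hwq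
          have hip' : i < p := by
            rcases lt_or_gt_of_ne hip with h | h
            · exact h
            · exact (hbet i h (by rw [← hjq]; exact hij) hi hiwq).elim
          exact Or.inl (Or.inr ⟨i, ⟨hip', hi, hiwq⟩, rfl, hjq.symm⟩)
      · by_cases hiq : i = q
        · have hqj : q < j := by rw [← hiq]; exact hij
          have hjp : j ≠ p := ne_of_gt (hpq.trans hqj)
          have hjw : w j < w p := by
            rw [hiq, huq, huo j hjp hjq] at hinv; exact hinv
          refine Or.inl (Or.inl (Or.inl ⟨⟨hij, by rw [hiq]; exact hjw.trans hw⟩, ?_⟩))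
          rintro (⟨r, ⟨_, hr2, _⟩, hqi, hrj⟩ | ⟨r, _, _, hpj⟩)
          · rw [hrj] at hr2
            exact absurd hr2 (not_lt.mpr hjw.le)
          · exact hjp hpj.symm
        · by_cases hjp : j = p
          · have hiw : w q < w i := by
              rw [hjp, hup, huo i hip hiq] at hinv; exact hinv
            refine Or.inl (Or.inl (Or.inl ⟨⟨hij, by rw [hjp]; exact hw.trans hiw⟩, ?_⟩))
            rintro (⟨r, _, hqi, _⟩ | ⟨r, ⟨_, _, hr3⟩, hri, _⟩)
            · exact hiq hqi.symm
            · rw [hri] at hr3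
              exact absurd hr3 (not_lt.mpr hiw.le)
          · have hinv' : w j < w i := by
              rw [huo j hjp hjq, huo i hip hiq] at hinv; exact hinv
            refine Or.inl (Or.inl (Or.inl ⟨⟨hij, hinv'⟩, ?_⟩))
            rintro (⟨r, _, hqi, _⟩ | ⟨r, _, _, hpj⟩)
            · exact hiq hqi.symm
            · exact hjp hpj.symm
  · rintro (((⟨⟨hij, hwji⟩, hnot⟩ | ⟨r, ⟨hr1, hr2, hr3⟩, hpi, hrj⟩) |
        ⟨r, ⟨hr1, hr2, hr3⟩, hri, hqj⟩) | ⟨hip, hjq⟩)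
    · obtain ⟨hn1, hn2⟩ := not_or.mp hnot
      refine ⟨hij, ?_⟩
      by_cases hip : i = p
      · have hjp : j ≠ p := by rw [← hip]; exact ne_of_gt hij
        by_cases hjq : j = q
        · rw [hip, hjq] at hwji
          exact absurd hwji (not_lt.mpr hw.le)
        · rw [hip, hup, huo j hjp hjq]
          exact (hip ▸ hwji).trans hw
      · by_cases hiq : i = q
        · have hqj : q < j := by rw [← hiq]; exact hij
          have hjp : j ≠ p := ne_of_gt (hpq.trans hqj)
          have hjq : j ≠ q := ne_of_gt hqj
          have hjw : w j < w q := by rw [← hiq]; exact hwji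
          have hnwpj : ¬ w p < w j := fun h => hn1 ⟨j, ⟨hqj, h, hjw⟩, hiq.symm, rfl⟩
          rw [hiq, huq, huo j hjp hjq]
          exact Stmt9Aux.wlt w (Ne.symm hjp) hnwpj
        · by_cases hjp : j = p
          · have hiplt : i < p := by rw [← hjp]; exact hij
            have hwpi : w p < w i := by rw [← hjp]; exact hwji
            have hnwiq : ¬ w i < w q := fun h => hn2 ⟨i, ⟨hiplt, hwpi, h⟩, rfl, hjp.symm⟩
            rw [hjp, hup, huo i hip hiq]
            exact Stmt9Aux.wlt w hiq hnwiq
          · by_cases hjq : j = q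
            · rw [hjq, huq, huo i hip hiq]
              exact hw.trans (hjq ▸ hwji)
            · rw [huo i hip hiq, huo j hjp hjq]
              exact hwji
    · refine ⟨?_, ?_⟩
      · rw [← hpi, ← hrj]; exact hpq.trans hr1
      · rw [← hpi, ← hrj, hup,
          huo r (ne_of_gt (hpq.trans hr1)) (ne_of_gt hr1)]
        exact hr3
    · refine ⟨?_, ?_⟩
      · rw [← hri, ← hqj]; exact hr1.trans hpq
      · rw [← hri, ← hqj, huq,
          huo r (ne_of_lt hr1) (ne_of_lt (hr1.trans hpq))]
        exact hr2
    · refine ⟨?_, ?_⟩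
      · rw [hip, hjq]; exact hpq
      · rw [hip, hjq, hup, huq]; exact hw
end

section
/- Under the highest-weight axioms, if there exists a non-split short exact sequence of A-modules 0 → L(μ) → X → Δ(λ) → 0, then λ < μ. (Equivalently, Ext^1(Δ(λ), L(μ)) ≠ 0 implies λ < μ.) -/
/-!
Lift `P(λ) ↠ Δ(λ)` through `X ↠ Δ(λ)` by projectivity. Since the sequence does not split, the
lift cannot vanish on the kernel of `P(λ) ↠ Δ(λ)`, so it induces a nonzero map from that kernel
to `L(μ)`. Through the `Δ`-filtration of the kernel this yields a nonzero, hence surjective, map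
`Δ(ν) ↠ L(μ)` for some `ν > λ`, and so a surjection `P(ν) ↠ L(μ)`. As `P(ν) ↠ L(ν)` is a
projective cover, its kernel is the unique maximal submodule of `P(ν)`, whence `μ = ν > λ`.
-/

/-- The subquotient `q / p` associated with submodules `p ≤ q` of a module. -/
abbrev Subquot {A M : Type} [Ring A] [AddCommGroup M] [Module A M]
    (p q : Submodule A M) : Type :=
  ↥q ⧸ (p.comap q.subtype)

/-- `M` has a finite filtration `0 = M₀ ⊆ M₁ ⊆ ⋯ ⊆ M_r = M` whose successive
quotients are standard modules `Δ μ` with `μ ∈ S`. -/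
def HasFilt (A : Type) [Ring A] {Λ : Type} (Δ : Λ → Type)
    [∀ l, AddCommGroup (Δ l)] [∀ l, Module A (Δ l)]
    (S : Set Λ) (M : Type) [AddCommGroup M] [Module A M] : Prop :=
  ∃ (r : ℕ) (c : Fin (r + 1) → Submodule A M),
    Monotone c ∧ c 0 = ⊥ ∧ c (Fin.last r) = ⊤ ∧
    ∀ k : Fin r, ∃ μ ∈ S, Nonempty (Subquot (c k.castSucc) (c k.succ) ≃ₗ[A] Δ μ)

/-- `M` belongs to the class `C_S`: every simple subquotient of `M` is isomorphic
to some `L μ` with `μ ∈ S`. -/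
def InC (A : Type) [Ring A] {Λ : Type} (L : Λ → Type)
    [∀ l, AddCommGroup (L l)] [∀ l, Module A (L l)]
    (S : Set Λ) (M : Type) [AddCommGroup M] [Module A M] : Prop :=
  ∀ p q : Submodule A M, p ≤ q → IsSimpleModule A (Subquot p q) →
    ∃ μ ∈ S, Nonempty (Subquot p q ≃ₗ[A] L μ)

open LinearMap

theorem Fin.exists_castSucc_and_not_succ {r : ℕ} {p : Fin (r + 1) → Prop} (h0 : p 0)
    (hlast : ¬ p (Fin.last r)) : ∃ k : Fin r, p k.castSucc ∧ ¬ p k.succ := by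
  by_contra! h
  exact hlast (Fin.induction h0 h (Fin.last r))

section Modules

variable {A : Type} [Ring A] {P X D : Type} [AddCommGroup P] [Module A P]
  [AddCommGroup X] [Module A X] [AddCommGroup D] [Module A D]

theorem LinearMap.exists_comp_eq_id_of_ker_le {r : P →ₗ[A] D} (hr : Function.Surjective r)
    {g : X →ₗ[A] D} {φ : P →ₗ[A] X} (hφ : g ∘ₗ φ = r) (hker : ker r ≤ ker φ) :
    ∃ s : D →ₗ[A] X, g ∘ₗ s = LinearMap.id := by
  let e := r.quotKerEquivOfSurjective hr
  let s : D →ₗ[A] X := (ker r).liftQ φ hker ∘ₗ (e.symm : D →ₗ[A] P ⧸ ker r)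
  have hs : s ∘ₗ r = φ := by
    ext p
    have : e.symm (r p) = Submodule.Quotient.mk p := e.symm_apply_eq.2 rfl
    simp [s, this]
  refine ⟨s, (cancel_right hr).1 ?_⟩
  rw [comp_assoc, hs, hφ, id_comp]

/-- Both kernels are maximal, so if they differed their sum would be `P` and `ker q` would map
onto `L`. -/
theorem LinearMap.ker_eq_ker_of_superfluous {L S : Type} [AddCommGroup L] [Module A L]
    [AddCommGroup S] [Module A S] [IsSimpleModule A L] [IsSimpleModule A S]
    {π : P →ₗ[A] L} (hπ : Function.Surjective π)
    (hcover : ∀ N : Submodule A P, N.map π = ⊤ → N = ⊤)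
    {q : P →ₗ[A] S} (hq : Function.Surjective q) : ker q = ker π := by
  by_contra hne
  have hmax := isCoatom_ker_of_surjective hq
  have hsup := hmax.sup_eq_top_of_ne (isCoatom_ker_of_surjective hπ) hne
  exact hmax.1 (hcover _ ((LinearMap.map_eq_top_iff (range_eq_top.2 hπ)).2 hsup))

theorem nonempty_linearEquiv_of_superfluous {L S : Type} [AddCommGroup L] [Module A L]
    [AddCommGroup S] [Module A S] [IsSimpleModule A L] [IsSimpleModule A S]
    {π : P →ₗ[A] L} (hπ : Function.Surjective π)
    (hcover : ∀ N : Submodule A P, N.map π = ⊤ → N = ⊤)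
    {q : P →ₗ[A] S} (hq : Function.Surjective q) : Nonempty (S ≃ₗ[A] L) :=
  ⟨(q.quotKerEquivOfSurjective hq).symm ≪≫ₗ
    Submodule.quotEquivOfEq _ _ (ker_eq_ker_of_superfluous hπ hcover hq) ≪≫ₗ
    π.quotKerEquivOfSurjective hπ⟩

end Modules

theorem HasFilt.exists_ne_zero {A : Type} [Ring A] {Λ : Type} {Δ : Λ → Type}
    [∀ l, AddCommGroup (Δ l)] [∀ l, Module A (Δ l)] {S : Set Λ}
    {M N : Type} [AddCommGroup M] [Module A M] [AddCommGroup N] [Module A N]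
    (hM : HasFilt A Δ S M) {ψ : M →ₗ[A] N} (hψ : ψ ≠ 0) :
    ∃ ν ∈ S, ∃ θ : Δ ν →ₗ[A] N, θ ≠ 0 := by
  obtain ⟨r, c, -, hc0, hclast, hquot⟩ := hM
  obtain ⟨k, hk, hk'⟩ := Fin.exists_castSucc_and_not_succ (p := fun j => c j ≤ ker ψ)
    (by simp [hc0]) (by rwa [hclast, top_le_iff, ker_eq_top])
  obtain ⟨ν, hν, ⟨e⟩⟩ := hquot k
  let ψk : Subquot (c k.castSucc) (c k.succ) →ₗ[A] N :=
    Submodule.liftQ _ (ψ ∘ₗ (c k.succ).subtype) fun x hx => hk hx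
  refine ⟨ν, hν, ψk ∘ₗ (e.symm : Δ ν →ₗ[A] _), fun h0 => hk' fun x hx => ?_⟩
  have h := LinearMap.congr_fun h0 (e (Submodule.Quotient.mk ⟨x, hx⟩))
  simp only [comp_apply, LinearEquiv.coe_coe, LinearEquiv.symm_apply_apply,
    LinearMap.zero_apply] at h
  exact h

theorem stmt12_general (A : Type) [Ring A]
    (Λ : Type) [PartialOrder Λ]
    (L : Λ → Type) [∀ l, AddCommGroup (L l)] [∀ l, Module A (L l)]
    (Δ : Λ → Type) [∀ l, AddCommGroup (Δ l)] [∀ l, Module A (Δ l)]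
    (P : Λ → Type) [∀ l, AddCommGroup (P l)] [∀ l, Module A (P l)]
    -- the simple modules `L λ`, pairwise non-isomorphic, exhausting all simples
    (hsimple : ∀ l, IsSimpleModule A (L l))
    (hdistinct : ∀ l m, l ≠ m → IsEmpty (L l ≃ₗ[A] L m))
    -- axiom (3): projective covers `P λ ↠ L λ` and `P λ ↠ Δ λ` with suitably
    -- filtered kernel
    (hproj : ∀ l, Module.Projective A (P l))
    (pr : ∀ l, P l →ₗ[A] L l)
    (hprsurj : ∀ l, Function.Surjective (pr l))
    (hprcover : ∀ l (N : Submodule A (P l)), Submodule.map (pr l) N = ⊤ → N = ⊤)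
    (rh : ∀ l, P l →ₗ[A] Δ l)
    (hrhsurj : ∀ l, Function.Surjective (rh l))
    (hrhker : ∀ l, HasFilt A Δ {ν | l < ν} ↥(LinearMap.ker (rh l)))
    -- a non-split short exact sequence `0 → L μ → X → Δ λ → 0`
    (l m : Λ) (X : Type) [AddCommGroup X] [Module A X]
    (f : L m →ₗ[A] X) (g : X →ₗ[A] Δ l)
    (hf : Function.Injective f) (hg : Function.Surjective g)
    (hexact : LinearMap.range f = LinearMap.ker g)
    (hnonsplit : ∀ s : Δ l →ₗ[A] X, g.comp s ≠ LinearMap.id) :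
    l < m := by
  obtain ⟨φ, hφ⟩ := Module.projective_lifting_property g (rh l) hg
  have hφker : ¬ ker (rh l) ≤ ker φ := fun hle =>
    let ⟨s, hs⟩ := exists_comp_eq_id_of_ker_le (hrhsurj l) hφ hle
    hnonsplit s hs
  have hmaps : ∀ x ∈ ker (rh l), φ x ∈ range f := fun x hx => by
    rwa [hexact, mem_ker, ← comp_apply, hφ]
  have hψ : φ.restrict hmaps ≠ 0 := fun h0 =>
    hφker fun x hx => congrArg Subtype.val (LinearMap.congr_fun h0 ⟨x, hx⟩)
  let eL : L m ≃ₗ[A] range f := LinearEquiv.ofInjective f hf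
  have := hsimple m
  have : IsSimpleModule A (range f) := IsSimpleModule.congr eL.symm
  obtain ⟨ν, hlν, θ, hθ⟩ := (hrhker l).exists_ne_zero hψ
  have := hsimple ν
  obtain ⟨e⟩ := nonempty_linearEquiv_of_superfluous (q := θ ∘ₗ rh ν) (hprsurj ν) (hprcover ν)
    ((surjective_of_ne_zero hθ).comp (hrhsurj ν))
  obtain rfl : m = ν := by_contra fun hne => (hdistinct m ν hne).false (eL ≪≫ₗ e)
  exact hlν

/-- under the highest-weight axioms, a non-split extension
`0 → L(μ) → X → Δ(λ) → 0` forces `λ < μ`. -/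
theorem stmt12 (K A : Type) [Field K] [Ring A] [Algebra K A] [FiniteDimensional K A]
    (Λ : Type) [Fintype Λ] [PartialOrder Λ]
    (L : Λ → Type) [∀ l, AddCommGroup (L l)] [∀ l, Module A (L l)]
    [∀ l, Module.Finite A (L l)]
    (Δ : Λ → Type) [∀ l, AddCommGroup (Δ l)] [∀ l, Module A (Δ l)]
    [∀ l, Module.Finite A (Δ l)]
    (P : Λ → Type) [∀ l, AddCommGroup (P l)] [∀ l, Module A (P l)]
    [∀ l, Module.Finite A (P l)]
    -- the simple modules `L λ`, pairwise non-isomorphic, exhausting all simples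
    (hsimple : ∀ l, IsSimpleModule A (L l))
    (hdistinct : ∀ l m, l ≠ m → IsEmpty (L l ≃ₗ[A] L m))
    (hall : ∀ (M : Type) [AddCommGroup M] [Module A M] [Module.Finite A M],
      IsSimpleModule A M → ∃ l, Nonempty (M ≃ₗ[A] L l))
    -- axiom (1)
    (hhom : ∀ l m, ¬ l ≤ m → ∀ f : Δ l →ₗ[A] Δ m, f = 0)
    -- axiom (2): endomorphisms of `Δ λ` are scalars from `K`
    (hend : ∀ l (f : Δ l →ₗ[A] Δ l), ∃ c : K, ∀ x, f x = algebraMap K A c • x)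
    -- axiom (3): projective covers `P λ ↠ L λ` and `P λ ↠ Δ λ` with suitably
    -- filtered kernel
    (hproj : ∀ l, Module.Projective A (P l))
    (pr : ∀ l, P l →ₗ[A] L l)
    (hprsurj : ∀ l, Function.Surjective (pr l))
    (hprcover : ∀ l (N : Submodule A (P l)), Submodule.map (pr l) N = ⊤ → N = ⊤)
    (rh : ∀ l, P l →ₗ[A] Δ l)
    (hrhsurj : ∀ l, Function.Surjective (rh l))
    (hrhker : ∀ l, HasFilt A Δ {ν | l < ν} ↥(LinearMap.ker (rh l)))
    -- a non-split short exact sequence `0 → L μ → X → Δ λ → 0`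
    (l m : Λ) (X : Type) [AddCommGroup X] [Module A X] [Module.Finite A X]
    (f : L m →ₗ[A] X) (g : X →ₗ[A] Δ l)
    (hf : Function.Injective f) (hg : Function.Surjective g)
    (hexact : LinearMap.range f = LinearMap.ker g)
    (hnonsplit : ∀ s : Δ l →ₗ[A] X, g.comp s ≠ LinearMap.id) :
    l < m :=
  stmt12_general A Λ L Δ P hsimple hdistinct hproj pr hprsurj hprcover rh hrhsurj hrhker l m X f g
    hf hg hexact hnonsplit
end

section
/- Under the highest-weight axioms, if there exists a non-split short exact sequence of A-modules 0 → Δ(μ) → X → Δ(λ) → 0, then λ < μ. (Equivalently, Ext^1(Δ(λ), Δ(μ)) ≠ 0 implies λ < μ.) -/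
/-- If `M` is filtered with subquotients `Δ ν`, `ν ∈ S`, and every hom
`Δ ν → Y` (`ν ∈ S`) vanishes, then every hom `M → Y` vanishes. -/
lemma filt_hom_zero {A : Type} [Ring A] {Λ : Type} {Δ : Λ → Type}
    [∀ l, AddCommGroup (Δ l)] [∀ l, Module A (Δ l)] {S : Set Λ}
    {M Y : Type} [AddCommGroup M] [Module A M] [AddCommGroup Y] [Module A Y]
    (hF : HasFilt A Δ S M)
    (hz : ∀ ν ∈ S, ∀ f : Δ ν →ₗ[A] Y, f = 0)
    (φ : M →ₗ[A] Y) : φ = 0 := by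
  obtain ⟨r, c, _, h0, hlast, hq⟩ := hF
  have key : ∀ k : Fin (r + 1), ∀ x, x ∈ c k → φ x = 0 := by
    intro k
    induction k using Fin.induction with
    | zero =>
      intro x hx
      rw [h0, Submodule.mem_bot] at hx
      simp [hx]
    | succ i ih =>
      intro x hx
      obtain ⟨ν, hν, ⟨e⟩⟩ := hq i
      have hle : (c i.castSucc).comap (c i.succ).subtype ≤
          LinearMap.ker (φ ∘ₗ (c i.succ).subtype) := by
        intro y hy
        simp only [LinearMap.mem_ker, LinearMap.comp_apply, Submodule.subtype_apply]
        exact ih y.1 hy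
      set ψ : Subquot (c i.castSucc) (c i.succ) →ₗ[A] Y :=
        Submodule.liftQ _ (φ ∘ₗ (c i.succ).subtype) hle with hψdef
      have hψ : ∀ q, ψ q = 0 := by
        intro q
        have h1 : ψ ∘ₗ (e.symm : Δ ν →ₗ[A] _) = 0 := hz ν hν _
        calc ψ q = ψ (e.symm (e q)) := by rw [e.symm_apply_apply]
        _ = (ψ ∘ₗ (e.symm : Δ ν →ₗ[A] _)) (e q) := rfl
        _ = 0 := by rw [h1]; rfl
      have h2 : φ x = ψ (Submodule.Quotient.mk ⟨x, hx⟩) := by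
        rw [hψdef, Submodule.liftQ_apply]; rfl
      rw [h2, hψ]
  ext x
  exact key (Fin.last r) x (by rw [hlast]; trivial)

/-- under the highest-weight axioms, a non-split extension
`0 → Δ(μ) → X → Δ(λ) → 0` forces `λ < μ`. -/
theorem stmt13 (K A : Type) [Field K] [Ring A] [Algebra K A] [FiniteDimensional K A]
    (Λ : Type) [Fintype Λ] [PartialOrder Λ]
    (L : Λ → Type) [∀ l, AddCommGroup (L l)] [∀ l, Module A (L l)]
    [∀ l, Module.Finite A (L l)]
    (Δ : Λ → Type) [∀ l, AddCommGroup (Δ l)] [∀ l, Module A (Δ l)]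
    [∀ l, Module.Finite A (Δ l)]
    (P : Λ → Type) [∀ l, AddCommGroup (P l)] [∀ l, Module A (P l)]
    [∀ l, Module.Finite A (P l)]
    -- the simple modules `L λ`, pairwise non-isomorphic, exhausting all simples
    (hsimple : ∀ l, IsSimpleModule A (L l))
    (hdistinct : ∀ l m, l ≠ m → IsEmpty (L l ≃ₗ[A] L m))
    (hall : ∀ (M : Type) [AddCommGroup M] [Module A M] [Module.Finite A M],
      IsSimpleModule A M → ∃ l, Nonempty (M ≃ₗ[A] L l))
    -- axiom (1)
    (hhom : ∀ l m, ¬ l ≤ m → ∀ f : Δ l →ₗ[A] Δ m, f = 0)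
    -- axiom (2): endomorphisms of `Δ λ` are scalars from `K`
    (hend : ∀ l (f : Δ l →ₗ[A] Δ l), ∃ c : K, ∀ x, f x = algebraMap K A c • x)
    -- axiom (3): projective covers `P λ ↠ L λ` and surjections `P λ ↠ Δ λ` with
    -- kernel filtered by `Δ ν`, `ν > λ`
    (hproj : ∀ l, Module.Projective A (P l))
    (pr : ∀ l, P l →ₗ[A] L l)
    (hprsurj : ∀ l, Function.Surjective (pr l))
    (hprcover : ∀ l (N : Submodule A (P l)), Submodule.map (pr l) N = ⊤ → N = ⊤)
    (rh : ∀ l, P l →ₗ[A] Δ l)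
    (hrhsurj : ∀ l, Function.Surjective (rh l))
    (hrhker : ∀ l, HasFilt A Δ {ν | l < ν} ↥(LinearMap.ker (rh l)))
    (l m : Λ) (X : Type) [AddCommGroup X] [Module A X] [Module.Finite A X]
    (f : Δ m →ₗ[A] X) (g : X →ₗ[A] Δ l)
    (hf : Function.Injective f) (hg : Function.Surjective g)
    (hexact : LinearMap.range f = LinearMap.ker g)
    (hnonsplit : ∀ s : Δ l →ₗ[A] X, g.comp s ≠ LinearMap.id) :
    l < m := by
  by_contra hlm
  haveI := hproj l
  obtain ⟨θ, hθ⟩ := Module.projective_lifting_property g (rh l) hg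
  -- θ maps ker (rh l) into range f = ker g
  have hmem : ∀ y : ↥(LinearMap.ker (rh l)), θ y.1 ∈ LinearMap.range f := by
    intro y
    rw [hexact, LinearMap.mem_ker]
    have h1 : g (θ y.1) = rh l y.1 := LinearMap.congr_fun hθ y.1
    rw [h1]; exact y.2
  -- the induced map ker (rh l) → Δ m
  set κ : ↥(LinearMap.ker (rh l)) →ₗ[A] Δ m :=
    (LinearEquiv.ofInjective f hf).symm.toLinearMap ∘ₗ
      LinearMap.codRestrict (LinearMap.range f)
        (θ ∘ₗ (LinearMap.ker (rh l)).subtype) (fun y => hmem y) with hκdef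
  have hκ : κ = 0 :=
    filt_hom_zero (hrhker l)
      (fun ν hν => hhom ν m (fun h => hlm (lt_of_lt_of_le hν h))) κ
  have hker : LinearMap.ker (rh l) ≤ LinearMap.ker θ := by
    intro x hx
    have h1 : f (κ ⟨x, hx⟩) = θ x := by
      rw [hκdef]
      simp only [LinearMap.comp_apply, LinearEquiv.coe_coe]
      have := (LinearEquiv.ofInjective f hf).apply_symm_apply
        ((LinearMap.codRestrict (LinearMap.range f)
          (θ ∘ₗ (LinearMap.ker (rh l)).subtype) (fun y => hmem y)) ⟨x, hx⟩)
      exact congrArg Subtype.val this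
    rw [hκ] at h1
    simp only [LinearMap.zero_apply, map_zero] at h1
    exact LinearMap.mem_ker.mpr h1.symm
  -- factor θ through Δ l to obtain a splitting
  set e := (rh l).quotKerEquivOfSurjective (hrhsurj l) with hedef
  set s : Δ l →ₗ[A] X :=
    ((LinearMap.ker (rh l)).liftQ θ hker) ∘ₗ e.symm.toLinearMap with hsdef
  refine hnonsplit s (LinearMap.ext fun d => ?_)
  obtain ⟨p, hp⟩ := hrhsurj l d
  have he : e (Submodule.Quotient.mk p) = d := by
    rw [← hp, hedef]
    rfl
  have hsym : e.symm d = Submodule.Quotient.mk p := by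
    rw [← he, e.symm_apply_apply]
  have hs : s d = θ p := by
    rw [hsdef]
    simp only [LinearMap.comp_apply, LinearEquiv.coe_coe, hsym, Submodule.liftQ_apply]
  simp only [LinearMap.comp_apply, LinearMap.id_apply, hs]
  rw [← hp]
  exact LinearMap.congr_fun hθ p
end

section
/- Under the highest-weight axioms, let Λ' ⊆ Λ be an order ideal and let λ ∈ Λ' be a maximal element of Λ'. Then Δ(λ) is projective relative to the class C_{Λ'}: for every surjective A-module homomorphism f : M → N with M, N ∈ C_{Λ'} and every homomorphism g : Δ(λ) → N, there exists h : Δ(λ) → M with f ∘ h = g. -/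
/-- Auxiliary: if `ker ψ ≤ U`, then the subquotient `range ψ / ψ(U)` of the target
is isomorphic to `P ⧸ U`. -/
theorem subquot_of_ker_le {A P M : Type} [Ring A] [AddCommGroup P] [Module A P]
    [AddCommGroup M] [Module A M] (ψ : P →ₗ[A] M) (U : Submodule A P)
    (hU : LinearMap.ker ψ ≤ U) :
    Nonempty ((P ⧸ U) ≃ₗ[A] Subquot (Submodule.map ψ U) (LinearMap.range ψ)) := by
  set θ : P →ₗ[A] Subquot (Submodule.map ψ U) (LinearMap.range ψ) :=
    (Submodule.mkQ _).comp ψ.rangeRestrict with hθ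
  have hsurj : Function.Surjective θ := by
    intro z
    obtain ⟨w, rfl⟩ := Submodule.mkQ_surjective _ z
    obtain ⟨x, hx⟩ := ψ.surjective_rangeRestrict w
    exact ⟨x, by simp [hθ, hx]⟩
  have hker : LinearMap.ker θ = U := by
    ext x
    simp only [hθ, LinearMap.mem_ker, LinearMap.comp_apply, Submodule.mkQ_apply,
      Submodule.Quotient.mk_eq_zero, Submodule.mem_comap]
    constructor
    · intro h
      obtain ⟨u, hu, huψ⟩ := h
      have hx : x - u ∈ LinearMap.ker ψ := by
        simp only [LinearMap.mem_ker, map_sub]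
        rw [sub_eq_zero, huψ]
        rfl
      have := hU hx
      simpa using U.add_mem this hu
    · intro hx
      exact ⟨x, hx, rfl⟩
  exact ⟨(Submodule.quotEquivOfEq U _ hker.symm).trans (θ.quotKerEquivOfSurjective hsurj)⟩

/-- under the highest-weight axioms, if `Λ'` is an order ideal of the
weight poset and `λ ∈ Λ'` is maximal in `Λ'`, then `Δ(λ)` is projective relative to
the class `C_{Λ'}`: any map `Δ(λ) → N` lifts through any surjection `M ↠ N`
between modules of `C_{Λ'}`. -/
theorem stmt14 (K A : Type) [Field K] [Ring A] [Algebra K A] [FiniteDimensional K A]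
    (Λ : Type) [Fintype Λ] [PartialOrder Λ]
    (L : Λ → Type) [∀ l, AddCommGroup (L l)] [∀ l, Module A (L l)]
    [∀ l, Module.Finite A (L l)]
    (Δ : Λ → Type) [∀ l, AddCommGroup (Δ l)] [∀ l, Module A (Δ l)]
    [∀ l, Module.Finite A (Δ l)]
    (P : Λ → Type) [∀ l, AddCommGroup (P l)] [∀ l, Module A (P l)]
    [∀ l, Module.Finite A (P l)]
    -- the simple modules `L λ`, pairwise non-isomorphic, exhausting all simples
    (hsimple : ∀ l, IsSimpleModule A (L l))
    (hdistinct : ∀ l m, l ≠ m → IsEmpty (L l ≃ₗ[A] L m))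
    (hall : ∀ (M : Type) [AddCommGroup M] [Module A M] [Module.Finite A M],
      IsSimpleModule A M → ∃ l, Nonempty (M ≃ₗ[A] L l))
    -- axiom (1)
    (hhom : ∀ l m, ¬ l ≤ m → ∀ f : Δ l →ₗ[A] Δ m, f = 0)
    -- axiom (2): endomorphisms of `Δ λ` are scalars from `K`
    (hend : ∀ l (f : Δ l →ₗ[A] Δ l), ∃ c : K, ∀ x, f x = algebraMap K A c • x)
    -- axiom (3): projective covers `P λ ↠ L λ` and surjections `P λ ↠ Δ λ` with
    -- kernel filtered by `Δ ν`, `ν > λ`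
    (hproj : ∀ l, Module.Projective A (P l))
    (pr : ∀ l, P l →ₗ[A] L l)
    (hprsurj : ∀ l, Function.Surjective (pr l))
    (hprcover : ∀ l (N : Submodule A (P l)), Submodule.map (pr l) N = ⊤ → N = ⊤)
    (rh : ∀ l, P l →ₗ[A] Δ l)
    (hrhsurj : ∀ l, Function.Surjective (rh l))
    (hrhker : ∀ l, HasFilt A Δ {ν | l < ν} ↥(LinearMap.ker (rh l)))
    (Λ' : Set Λ) (hideal : ∀ μ l, μ ≤ l → l ∈ Λ' → μ ∈ Λ')
    (l : Λ) (hl : l ∈ Λ') (hmax : ∀ m ∈ Λ', ¬ l < m)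
    (M N : Type) [AddCommGroup M] [Module A M] [Module.Finite A M]
    [AddCommGroup N] [Module A N] [Module.Finite A N]
    (hM : InC A L Λ' M) (hN : InC A L Λ' N)
    (f : M →ₗ[A] N) (hf : Function.Surjective f) (g : Δ l →ₗ[A] N) :
    ∃ h : Δ l →ₗ[A] M, f.comp h = g := by
  classical
  -- Step 1: any map from `Δ ν`, `ν ∉ Λ'`, into `M` is zero.
  have keyA : ∀ ν, ν ∉ Λ' → ∀ φ : Δ ν →ₗ[A] M, φ = 0 := by
    intro ν hν φ
    by_contra hφ
    -- ψ : P ν → M is nonzero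
    set ψ : P ν →ₗ[A] M := φ.comp (rh ν) with hψdef
    have hψne : LinearMap.ker ψ ≠ ⊤ := by
      intro htop
      apply hφ
      ext x
      obtain ⟨y, rfl⟩ := hrhsurj ν x
      have : y ∈ LinearMap.ker ψ := htop ▸ Submodule.mem_top
      simpa [hψdef] using this
    -- ker ψ is contained in the unique maximal submodule ker (pr ν)
    have hkerle : LinearMap.ker ψ ≤ LinearMap.ker (pr ν) := by
      haveI := hsimple ν
      rcases eq_bot_or_eq_top (Submodule.map (pr ν) (LinearMap.ker ψ)) with hb | ht
      · intro x hx
        have : pr ν x ∈ Submodule.map (pr ν) (LinearMap.ker ψ) :=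
          ⟨x, hx, rfl⟩
        rw [hb] at this
        simpa using this
      · exact absurd (hprcover ν _ ht) hψne
    -- so `L ν` appears as a subquotient of `M`
    obtain ⟨e1⟩ := subquot_of_ker_le ψ (LinearMap.ker (pr ν)) hkerle
    have e2 : (P ν ⧸ LinearMap.ker (pr ν)) ≃ₗ[A] L ν :=
      (pr ν).quotKerEquivOfSurjective (hprsurj ν)
    have e3 : Subquot (Submodule.map ψ (LinearMap.ker (pr ν))) (LinearMap.range ψ)
        ≃ₗ[A] L ν := e1.symm.trans e2
    haveI : IsSimpleModule A (L ν) := hsimple ν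
    haveI hsq : IsSimpleModule A
        (Subquot (Submodule.map ψ (LinearMap.ker (pr ν))) (LinearMap.range ψ)) :=
      IsSimpleModule.congr e3
    have hle : Submodule.map ψ (LinearMap.ker (pr ν)) ≤ LinearMap.range ψ :=
      LinearMap.map_le_range
    obtain ⟨μ, hμ, ⟨e4⟩⟩ := hM _ _ hle hsq
    have : ν ≠ μ := fun h => hν (h ▸ hμ)
    exact (hdistinct ν μ this).false (e3.symm.trans e4)
  -- Step 2: any map from `ker (rh l)` (filtered by `Δ ν`, `ν > l`) into `M` is zero.
  have keyB : ∀ φ : ↥(LinearMap.ker (rh l)) →ₗ[A] M, φ = 0 := by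
    obtain ⟨r, c, hmono, h0, hlast, hq⟩ := hrhker l
    intro φ
    have main : ∀ k : Fin (r + 1), ∀ x, x ∈ c k → φ x = 0 := by
      intro k
      induction k using Fin.induction with
      | zero =>
        intro x hx
        rw [h0] at hx
        have hx0 : x = 0 := by simpa using hx
        simp [hx0]
      | succ k ih =>
        intro x hx
        obtain ⟨μ, hμ, ⟨e⟩⟩ := hq k
        have hμ' : μ ∉ Λ' := fun hin => hmax μ hin hμ
        set ψ : ↥(c k.succ) →ₗ[A] M := φ.comp (c k.succ).subtype with hψdef
        have hkill : (c k.castSucc).comap (c k.succ).subtype ≤ LinearMap.ker ψ := by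
          intro y hy
          exact ih y (by simpa using hy)
        set χ : Subquot (c k.castSucc) (c k.succ) →ₗ[A] M :=
          Submodule.liftQ _ ψ hkill with hχdef
        have hz : χ.comp (e.symm : Δ μ →ₗ[A] Subquot (c k.castSucc) (c k.succ)) = 0 :=
          keyA μ hμ' _
        have hχ0 : ∀ z, χ z = 0 := by
          intro z
          have := LinearMap.congr_fun hz (e z)
          simpa using this
        have hφx : φ x = χ (Submodule.Quotient.mk ⟨x, hx⟩) := rfl
        rw [hφx, hχ0]
    ext x
    exact main (Fin.last r) x (hlast ▸ Submodule.mem_top)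
  -- Step 3: lift `g ∘ rh l` through `f` by projectivity, then factor through `Δ l`.
  haveI := hproj l
  obtain ⟨h', hh'⟩ := Module.projective_lifting_property f (g.comp (rh l)) hf
  have hkerle : LinearMap.ker (rh l) ≤ LinearMap.ker h' := by
    intro x hx
    have := LinearMap.congr_fun (keyB (h'.comp (LinearMap.ker (rh l)).subtype)) ⟨x, hx⟩
    simpa using this
  set e : (P l ⧸ LinearMap.ker (rh l)) ≃ₗ[A] Δ l :=
    (rh l).quotKerEquivOfSurjective (hrhsurj l) with hedef
  refine ⟨(Submodule.liftQ _ h' hkerle).comp (e.symm : Δ l →ₗ[A] _), ?_⟩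
  ext x
  obtain ⟨y, rfl⟩ := hrhsurj l x
  have he : e (Submodule.Quotient.mk y) = rh l y := by
    simp [hedef, LinearMap.quotKerEquivOfSurjective]
  have hes : e.symm (rh l y) = Submodule.Quotient.mk y := by
    rw [← he, LinearEquiv.symm_apply_apply]
  simp only [LinearMap.comp_apply, LinearEquiv.coe_coe, hes, Submodule.liftQ_apply]
  exact LinearMap.congr_fun hh' y
end

section
/- Under the highest-weight axioms, the multiplicities in a Δ-filtration are well-defined: if 0 = M_0 ⊆ M_1 ⊆ ⋯ ⊆ M_r = M and 0 = M'_0 ⊆ M'_1 ⊆ ⋯ ⊆ M'_s = M are two Δ-filtrations of the same module M, then for every λ ∈ Λ the number of indices k with M_k/M_{k−1} ≅ Δ(λ) equals the number of indices k with M'_k/M'_{k−1} ≅ Δ(λ); in particular r = s. -/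
open Module

theorem Fin.eq_add_sum_of_succ_eq_add {M : Type*} [AddCommMonoid M] {n : ℕ}
    (f : Fin (n + 1) → M) (g : Fin n → M) (h : ∀ k, f k.succ = f k.castSucc + g k) :
    f (Fin.last n) = f 0 + ∑ k, g k := by
  induction n with
  | zero => simp
  | succ n ih =>
    rw [Fin.sum_univ_castSucc, ← add_assoc, ← Fin.succ_last, h]
    exact congrArg (· + g (Fin.last n)) (ih (f ∘ Fin.castSucc) _ fun k => h k.castSucc)

section HomDimension

variable {K A : Type*} [Field K] [Ring A] [Algebra K A]
  {Q : Type*} [AddCommGroup Q] [Module A Q]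
  {N : Type*} [AddCommGroup N] [Module A N] [Module K N] [IsScalarTower K A N]

theorem finiteDimensional_linearMap [FiniteDimensional K A] [Module K Q] [IsScalarTower K A Q]
    [Module.Finite A Q] [Module.Finite A N] : FiniteDimensional K (Q →ₗ[A] N) :=
  have : FiniteDimensional K Q := Module.Finite.trans A Q
  have : FiniteDimensional K N := Module.Finite.trans A N
  FiniteDimensional.of_injective (LinearMap.restrictScalarsₗ K A Q N K)
    (LinearMap.restrictScalars_injective K)

theorem LinearMap.compRight_injective {Y : Type*} [AddCommGroup Y] [Module A Y] [Module K Y]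
    [IsScalarTower K A Y] {f : Y →ₗ[A] N} (hf : Function.Injective f) :
    Function.Injective (LinearMap.compRight (M := Q) K f) :=
  fun _ _ h => LinearMap.ext fun x => hf (LinearMap.congr_fun h x)

theorem finrank_linearMap_congr_right {Y : Type*} [AddCommGroup Y] [Module A Y] [Module K Y]
    [IsScalarTower K A Y] (e : Y ≃ₗ[A] N) :
    finrank K (Q →ₗ[A] Y) = finrank K (Q →ₗ[A] N) :=
  (LinearEquiv.ofLinearMap (LinearMap.compRight K e.toLinearMap)
    (LinearMap.compRight K e.symm.toLinearMap) (by ext; simp) (by ext; simp)).finrank_eq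

theorem finrank_linearMap_eq_add_finrank_quotient [Module.Projective A Q]
    [FiniteDimensional K (Q →ₗ[A] N)] (p : Submodule A N) :
    finrank K (Q →ₗ[A] N) = finrank K (Q →ₗ[A] p) + finrank K (Q →ₗ[A] N ⧸ p) := by
  let ι := LinearMap.compRight (M := Q) K p.subtype
  let π := LinearMap.compRight (M := Q) K p.mkQ
  have hπ : Function.Surjective π := fun g =>
    Module.projective_lifting_property p.mkQ g p.mkQ_surjective
  have hker : LinearMap.ker π = LinearMap.range ι := by
    ext f
    constructor
    · intro hf
      refine ⟨f.codRestrict p fun x => ?_, rfl⟩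
      simpa [π, Submodule.Quotient.mk_eq_zero] using LinearMap.congr_fun hf x
    · rintro ⟨g, rfl⟩
      ext x
      simp [ι, π]
  have := π.finrank_range_add_finrank_ker
  rw [LinearMap.range_eq_top.2 hπ, finrank_top, hker,
    LinearMap.finrank_range_of_inj (LinearMap.compRight_injective p.injective_subtype)] at this
  omega

end HomDimension

theorem finrank_linearMap_eq_sum_of_filtration {K A Q N : Type} [Field K] [Ring A]
    [Algebra K A] [AddCommGroup Q] [Module A Q] [Module.Projective A Q] [AddCommGroup N]
    [Module A N] [Module K N] [IsScalarTower K A N] [FiniteDimensional K (Q →ₗ[A] N)] {r : ℕ}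
    {c : Fin (r + 1) → Submodule A N}
    (hc : Monotone c) (hc0 : c 0 = ⊥) (hcl : c (Fin.last r) = ⊤) :
    finrank K (Q →ₗ[A] N) =
      ∑ k : Fin r, finrank K (Q →ₗ[A] Subquot (c k.castSucc) (c k.succ)) := by
  have hfin (p : Submodule A N) : FiniteDimensional K (Q →ₗ[A] p) :=
    .of_injective _ (LinearMap.compRight_injective (Q := Q) p.injective_subtype)
  have hstep (k : Fin r) : finrank K (Q →ₗ[A] c k.succ) = finrank K (Q →ₗ[A] c k.castSucc) +
      finrank K (Q →ₗ[A] Subquot (c k.castSucc) (c k.succ)) := by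
    rw [finrank_linearMap_eq_add_finrank_quotient ((c k.castSucc).comap (c k.succ).subtype),
      finrank_linearMap_congr_right
        (Submodule.comapSubtypeEquivOfLe (hc (Fin.castSucc_le_succ k)))]
  have := Fin.eq_add_sum_of_succ_eq_add (fun j => finrank K (Q →ₗ[A] c j)) _ hstep
  rwa [hc0, hcl, finrank_linearMap_congr_right Submodule.topEquiv,
    finrank_zero_of_subsingleton (M := Q →ₗ[A] (⊥ : Submodule A N)), zero_add] at this

theorem LinearMap.exists_comp_eq_of_ker_le {A N N' Y : Type*} [Ring A] [AddCommGroup N]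
    [Module A N] [AddCommGroup N'] [Module A N'] [AddCommGroup Y] [Module A Y]
    (q : N →ₗ[A] N') (hq : Function.Surjective q) (f : N →ₗ[A] Y) (h : ker q ≤ ker f) :
    ∃ g : N' →ₗ[A] Y, g ∘ₗ q = f :=
  ⟨(ker q).liftQ f h ∘ₗ (q.quotKerEquivOfSurjective hq).symm.toLinearMap, by ext; simp⟩

section Filtration

variable {A : Type} [Ring A] {Λ : Type} {Δ : Λ → Type} [∀ l, AddCommGroup (Δ l)]
  [∀ l, Module A (Δ l)] {N Y : Type} [AddCommGroup N] [Module A N] [AddCommGroup Y] [Module A Y]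

theorem HasFilt.linearMap_eq_zero {S : Set Λ} (hN : HasFilt A Δ S N)
    (hY : ∀ ν ∈ S, ∀ g : Δ ν →ₗ[A] Y, g = 0) (f : N →ₗ[A] Y) : f = 0 := by
  obtain ⟨r, c, -, hc0, hcl, hcq⟩ := hN
  suffices ∀ j, c j ≤ LinearMap.ker f by
    simpa [hcl, LinearMap.ker_eq_top] using this (Fin.last r)
  intro j
  induction j using Fin.induction with
  | zero => simp [hc0]
  | succ k ih =>
    obtain ⟨ν, hν, ⟨e⟩⟩ := hcq k
    let g : Subquot (c k.castSucc) (c k.succ) →ₗ[A] Y :=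
      ((c k.castSucc).comap (c k.succ).subtype).liftQ (f ∘ₗ (c k.succ).subtype)
        fun x hx => ih hx
    have hg : g = 0 :=
      LinearMap.ext fun y => by simpa using LinearMap.congr_fun (hY ν hν (g ∘ₗ e.symm)) (e y)
    intro x hx
    exact LinearMap.congr_fun hg (Submodule.Quotient.mk ⟨x, hx⟩)

theorem HasFilt.exists_comp_eq {D : Type} [AddCommGroup D] [Module A D] {S : Set Λ}
    (rh : N →ₗ[A] D) (hrh : Function.Surjective rh) (hker : HasFilt A Δ S (LinearMap.ker rh))
    (hY : ∀ ν ∈ S, ∀ g : Δ ν →ₗ[A] Y, g = 0) (f : N →ₗ[A] Y) :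
    ∃ g : D →ₗ[A] Y, g ∘ₗ rh = f :=
  rh.exists_comp_eq_of_ker_le hrh f fun x hx =>
    LinearMap.congr_fun (hker.linearMap_eq_zero hY (f ∘ₗ (LinearMap.ker rh).subtype)) ⟨x, hx⟩

end Filtration

theorem nonempty_linearEquiv_of_linearMap_ne_zero {A P L L' : Type*} [Ring A]
    [AddCommGroup P] [Module A P] [AddCommGroup L] [Module A L] [AddCommGroup L'] [Module A L']
    [IsSimpleModule A L] [IsSimpleModule A L'] (pr : P →ₗ[A] L) (hpr : Function.Surjective pr)
    (hcover : ∀ N : Submodule A P, N.map pr = ⊤ → N = ⊤) (h : P →ₗ[A] L') (hh : h ≠ 0) :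
    Nonempty (L' ≃ₗ[A] L) := by
  have hker : LinearMap.ker h ≤ LinearMap.ker pr := by
    rcases eq_bot_or_eq_top ((LinearMap.ker h).map pr) with hbot | htop
    · exact Submodule.map_le_iff_le_comap.1 hbot.le |>.trans (by simp)
    · exact absurd (LinearMap.ker_eq_top.1 (hcover _ htop)) hh
  have hh' : Function.Surjective h := by
    rw [← LinearMap.range_eq_top]
    exact (eq_bot_or_eq_top _).resolve_left (LinearMap.range_eq_bot.not.2 hh)
  obtain ⟨g, hg⟩ := h.exists_comp_eq_of_ker_le hh' pr hker
  have hg0 : g ≠ 0 := by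
    rintro rfl
    have := IsSimpleModule.nontrivial A L
    exact LinearMap.ne_zero_of_surjective hpr (by simpa using hg.symm)
  exact ⟨LinearEquiv.ofBijective g (LinearMap.bijective_of_ne_zero hg0)⟩

theorem finrank_linearMap_eq_one {K A P D : Type*} [Field K] [Ring A] [Algebra K A]
    [AddCommGroup P] [Module A P] [AddCommGroup D] [Module A D] [Module K D]
    [IsScalarTower K A D] [Nontrivial D] (rh : P →ₗ[A] D) (hrh : Function.Surjective rh)
    (hfac : ∀ f : P →ₗ[A] D, ∃ g : D →ₗ[A] D, g ∘ₗ rh = f)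
    (hend : ∀ g : D →ₗ[A] D, ∃ c : K, ∀ x, g x = c • x) :
    finrank K (P →ₗ[A] D) = 1 := by
  refine (finrank_eq_one_iff_of_nonzero' rh (LinearMap.ne_zero_of_surjective hrh)).2 fun f => ?_
  obtain ⟨g, rfl⟩ := hfac f
  obtain ⟨c, hc⟩ := hend g
  exact ⟨c, LinearMap.ext fun x => by simp [hc]⟩

theorem eq_of_forall_sum_mul_eq_of_unitriangular {Λ : Type*} [Fintype Λ] [PartialOrder Λ]
    (T : Λ → Λ → ℕ) (hT0 : ∀ l m, ¬ l ≤ m → T l m = 0) (hT1 : ∀ l, T l l = 1)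
    {v w : Λ → ℕ} (h : ∀ l, ∑ m, v m * T l m = ∑ m, w m * T l m) : v = w := by
  classical
  funext l
  induction l using WellFoundedGT.induction with
  | _ l ih =>
    have hrest : ∑ m ∈ Finset.univ.erase l, v m * T l m =
        ∑ m ∈ Finset.univ.erase l, w m * T l m := Finset.sum_congr rfl fun m hm => by
      by_cases hlm : l ≤ m
      · rw [ih m (lt_of_le_of_ne hlm (Finset.ne_of_mem_erase hm).symm)]
      · simp [hT0 l m hlm]
    have := h l
    rwa [← Finset.add_sum_erase _ _ (Finset.mem_univ l),
      ← Finset.add_sum_erase _ _ (Finset.mem_univ l), hrest, hT1, mul_one, mul_one,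
      add_left_inj] at this

theorem Fintype.sum_eq_sum_card_mul {ι κ : Type*} [Fintype ι] [Fintype κ] (R : ι → κ → Prop)
    (hR : ∀ i, ∃! j, R i j) (f : ι → ℕ) (F : κ → ℕ) (hf : ∀ i j, R i j → f i = F j) :
    ∑ i, f i = ∑ j, Nat.card {i // R i j} * F j := by
  classical
  choose φ hφ using fun i => (hR i).exists
  have hRφ (i j) : R i j ↔ φ i = j :=
    ⟨fun hij => (hR i).unique (hφ i) hij, by rintro rfl; exact hφ i⟩
  rw [← Finset.sum_fiberwise Finset.univ φ f]
  refine Finset.sum_congr rfl fun j _ => ?_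
  rw [Finset.sum_congr rfl fun i hi => hf i j ((hRφ i j).2 (Finset.mem_filter.1 hi).2),
    Finset.sum_const, smul_eq_mul, Nat.card_congr (Equiv.subtypeEquivRight fun i => hRφ i j),
    Nat.card_eq_fintype_card, Fintype.card_subtype]

theorem Fintype.card_eq_sum_card {ι κ : Type*} [Fintype ι] [Fintype κ] (R : ι → κ → Prop)
    (hR : ∀ i, ∃! j, R i j) : Fintype.card ι = ∑ j, Nat.card {i // R i j} := by
  simpa using Fintype.sum_eq_sum_card_mul R hR 1 1 fun _ _ _ => rfl

section HighestWeight

variable {A : Type} [Ring A] {Λ : Type} [PartialOrder Λ]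
  {Δ : Λ → Type} [∀ l, AddCommGroup (Δ l)] [∀ l, Module A (Δ l)]

theorem nontrivial_of_hasFilt_ker {L P : Λ → Type} [∀ l, AddCommGroup (L l)]
    [∀ l, Module A (L l)] [∀ l, AddCommGroup (P l)] [∀ l, Module A (P l)]
    (hsimple : ∀ l, IsSimpleModule A (L l))
    (hdistinct : ∀ l m, l ≠ m → IsEmpty (L l ≃ₗ[A] L m))
    (pr : ∀ l, P l →ₗ[A] L l) (hprsurj : ∀ l, Function.Surjective (pr l))
    (hprcover : ∀ l (N : Submodule A (P l)), Submodule.map (pr l) N = ⊤ → N = ⊤)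
    (rh : ∀ l, P l →ₗ[A] Δ l) (hrhsurj : ∀ l, Function.Surjective (rh l))
    (hrhker : ∀ l, HasFilt A Δ {ν | l < ν} ↥(LinearMap.ker (rh l))) (l : Λ) :
    Nontrivial (Δ l) := by
  -- if `Δ l = 0`, then `P l` is itself `Δ(ν > l)`-filtered, so its top `L l` would be a quotient
  -- of some `Δ ν`, hence of `P ν`
  by_contra hΔ
  rw [not_nontrivial_iff_subsingleton] at hΔ
  have hL (ν : Λ) (hν : l < ν) (g : Δ ν →ₗ[A] L l) : g = 0 := by
    by_contra hg
    obtain ⟨e⟩ := nonempty_linearEquiv_of_linearMap_ne_zero (pr ν) (hprsurj ν) (hprcover ν)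
      (g ∘ₗ rh ν)
      (by rwa [ne_eq, ← LinearMap.zero_comp (rh ν), LinearMap.cancel_right (hrhsurj ν)])
    exact (hdistinct l ν hν.ne).false e
  have hpr := (hrhker l).linearMap_eq_zero hL (pr l ∘ₗ (LinearMap.ker (rh l)).subtype)
  have := IsSimpleModule.nontrivial A (L l)
  exact LinearMap.ne_zero_of_surjective (hprsurj l) <| LinearMap.ext fun x =>
    LinearMap.congr_fun hpr ⟨x, Subsingleton.elim _ _⟩

variable (hhom : ∀ l m, ¬ l ≤ m → ∀ f : Δ l →ₗ[A] Δ m, f = 0)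
include hhom

theorem eq_of_linearEquiv [∀ l, Nontrivial (Δ l)] {a b : Λ} (e : Δ a ≃ₗ[A] Δ b) : a = b :=
  le_antisymm (by_contra fun h => LinearMap.ne_zero_of_surjective e.surjective (hhom a b h e))
    (by_contra fun h => LinearMap.ne_zero_of_surjective e.symm.surjective (hhom b a h e.symm))

variable {Q : Type} [AddCommGroup Q] [Module A Q] {l : Λ} (rh : Q →ₗ[A] Δ l)
  (hrh : Function.Surjective rh) (hker : HasFilt A Δ {ν | l < ν} ↥(LinearMap.ker rh))
include hrh hker

theorem le_of_linearMap_ne_zero {m : Λ} (f : Q →ₗ[A] Δ m) (hf : f ≠ 0) : l ≤ m := by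
  by_contra hlm
  obtain ⟨g, rfl⟩ := hker.exists_comp_eq rh hrh
    (fun ν hν g => hhom ν m (fun hνm => hlm (hν.trans_le hνm).le) g) f
  exact hf (by rw [hhom l m hlm g, LinearMap.zero_comp])

theorem finrank_linearMap_eq_zero_of_not_le (K : Type) [Field K] [Algebra K A] {m : Λ}
    [Module K (Δ m)] [IsScalarTower K A (Δ m)] (hlm : ¬ l ≤ m) :
    finrank K (Q →ₗ[A] Δ m) = 0 :=
  have : Subsingleton (Q →ₗ[A] Δ m) := subsingleton_of_forall_eq 0 fun f =>
    by_contra fun hf => hlm (le_of_linearMap_ne_zero hhom rh hrh hker f hf)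
  finrank_zero_of_subsingleton

theorem finrank_linearMap_self_eq_one (K : Type) [Field K] [Algebra K A]
    [Module K (Δ l)] [IsScalarTower K A (Δ l)] [Nontrivial (Δ l)]
    (hend : ∀ g : Δ l →ₗ[A] Δ l, ∃ c : K, ∀ x, g x = c • x) :
    finrank K (Q →ₗ[A] Δ l) = 1 :=
  finrank_linearMap_eq_one rh hrh (hker.exists_comp_eq rh hrh
    fun ν hν g => hhom ν l (fun hνl => lt_irrefl l (hν.trans_le hνl)) g) hend

end HighestWeight

section Multiplicity

variable {A : Type} [Ring A] {Λ : Type} {Δ : Λ → Type} [∀ l, AddCommGroup (Δ l)]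
  [∀ l, Module A (Δ l)] (hinj : ∀ a b, Nonempty (Δ a ≃ₗ[A] Δ b) → a = b)
  {M : Type} [AddCommGroup M] [Module A M] {r : ℕ} {c : Fin (r + 1) → Submodule A M}
  (hcq : ∀ k : Fin r, ∃ μ, Nonempty (Subquot (c k.castSucc) (c k.succ) ≃ₗ[A] Δ μ))
include hinj hcq

theorem existsUnique_standard_factor (k : Fin r) :
    ∃! μ, Nonempty (Subquot (c k.castSucc) (c k.succ) ≃ₗ[A] Δ μ) :=
  let ⟨μ, ⟨e⟩⟩ := hcq k
  ⟨μ, ⟨e⟩, fun _ ⟨e'⟩ => hinj _ _ ⟨e'.symm.trans e⟩⟩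

variable [Fintype Λ]

theorem length_eq_sum_card_standard_factor :
    r = ∑ μ, Nat.card {k : Fin r // Nonempty (Subquot (c k.castSucc) (c k.succ) ≃ₗ[A] Δ μ)} := by
  simpa using Fintype.card_eq_sum_card _ (existsUnique_standard_factor hinj hcq)

theorem finrank_linearMap_eq_sum_card_standard_factor {K Q : Type} [Field K] [Algebra K A]
    [∀ l, Module K (Δ l)] [∀ l, IsScalarTower K A (Δ l)] [Module K M] [IsScalarTower K A M]
    [AddCommGroup Q] [Module A Q] [Module.Projective A Q] [FiniteDimensional K (Q →ₗ[A] M)]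
    (hc : Monotone c) (hc0 : c 0 = ⊥) (hcl : c (Fin.last r) = ⊤) :
    finrank K (Q →ₗ[A] M) = ∑ μ, Nat.card {k : Fin r //
      Nonempty (Subquot (c k.castSucc) (c k.succ) ≃ₗ[A] Δ μ)} * finrank K (Q →ₗ[A] Δ μ) := by
  rw [finrank_linearMap_eq_sum_of_filtration hc hc0 hcl]
  exact Fintype.sum_eq_sum_card_mul _ (existsUnique_standard_factor hinj hcq) _ _
    fun _ _ ⟨e⟩ => finrank_linearMap_congr_right e

end Multiplicity

theorem stmt16_general (K A : Type) [Field K] [Ring A] [Algebra K A] [FiniteDimensional K A]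
    (Λ : Type) [Fintype Λ] [PartialOrder Λ]
    (L : Λ → Type) [∀ l, AddCommGroup (L l)] [∀ l, Module A (L l)]
    (Δ : Λ → Type) [∀ l, AddCommGroup (Δ l)] [∀ l, Module A (Δ l)]
    (P : Λ → Type) [∀ l, AddCommGroup (P l)] [∀ l, Module A (P l)]
    [∀ l, Module.Finite A (P l)]
    -- the simple modules `L λ`, pairwise non-isomorphic, exhausting all simples
    (hsimple : ∀ l, IsSimpleModule A (L l))
    (hdistinct : ∀ l m, l ≠ m → IsEmpty (L l ≃ₗ[A] L m))
    -- axiom (1)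
    (hhom : ∀ l m, ¬ l ≤ m → ∀ f : Δ l →ₗ[A] Δ m, f = 0)
    -- axiom (2): endomorphisms of `Δ λ` are scalars from `K`
    (hend : ∀ l (f : Δ l →ₗ[A] Δ l), ∃ c : K, ∀ x, f x = algebraMap K A c • x)
    -- axiom (3): projective covers `P λ ↠ L λ` and surjections `P λ ↠ Δ λ` with
    -- kernel filtered by `Δ ν`, `ν > λ`
    (hproj : ∀ l, Module.Projective A (P l))
    (pr : ∀ l, P l →ₗ[A] L l)
    (hprsurj : ∀ l, Function.Surjective (pr l))
    (hprcover : ∀ l (N : Submodule A (P l)), Submodule.map (pr l) N = ⊤ → N = ⊤)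
    (rh : ∀ l, P l →ₗ[A] Δ l)
    (hrhsurj : ∀ l, Function.Surjective (rh l))
    (hrhker : ∀ l, HasFilt A Δ {ν | l < ν} ↥(LinearMap.ker (rh l)))
    (M : Type) [AddCommGroup M] [Module A M] [Module.Finite A M]
    (r s : ℕ) (c : Fin (r + 1) → Submodule A M) (c' : Fin (s + 1) → Submodule A M)
    (hc : Monotone c) (hc0 : c 0 = ⊥) (hcl : c (Fin.last r) = ⊤)
    (hcq : ∀ k : Fin r, ∃ μ, Nonempty (Subquot (c k.castSucc) (c k.succ) ≃ₗ[A] Δ μ))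
    (hc' : Monotone c') (hc'0 : c' 0 = ⊥) (hc'l : c' (Fin.last s) = ⊤)
    (hc'q : ∀ k : Fin s, ∃ μ, Nonempty (Subquot (c' k.castSucc) (c' k.succ) ≃ₗ[A] Δ μ)) :
    r = s ∧
    ∀ l : Λ,
      Nat.card {k : Fin r // Nonempty (Subquot (c k.castSucc) (c k.succ) ≃ₗ[A] Δ l)} =
      Nat.card {k : Fin s // Nonempty (Subquot (c' k.castSucc) (c' k.succ) ≃ₗ[A] Δ l)} := by
  -- `c • x` is `algebraMap K A c • x` by definition of `compHom`, so `hend` applies as it stands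
  let : ∀ l, Module K (Δ l) := fun _ => .compHom _ (algebraMap K A)
  let : ∀ l, Module K (P l) := fun _ => .compHom _ (algebraMap K A)
  let : Module K M := .compHom _ (algebraMap K A)
  have : ∀ l, IsScalarTower K A (Δ l) := fun _ => .of_algebraMap_smul fun _ _ => rfl
  have : ∀ l, IsScalarTower K A (P l) := fun _ => .of_algebraMap_smul fun _ _ => rfl
  have : IsScalarTower K A M := .of_algebraMap_smul fun _ _ => rfl
  have : ∀ l, FiniteDimensional K (P l →ₗ[A] M) := fun _ => finiteDimensional_linearMap
  have : ∀ l, Nontrivial (Δ l) :=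
    nontrivial_of_hasFilt_ker hsimple hdistinct pr hprsurj hprcover rh hrhsurj hrhker
  have hinj (a b : Λ) : Nonempty (Δ a ≃ₗ[A] Δ b) → a = b := fun ⟨e⟩ => eq_of_linearEquiv hhom e
  have hmult := eq_of_forall_sum_mul_eq_of_unitriangular
    (fun l m => finrank K (P l →ₗ[A] Δ m))
    (fun l _ => finrank_linearMap_eq_zero_of_not_le hhom (rh l) (hrhsurj l) (hrhker l) K)
    (fun l => finrank_linearMap_self_eq_one hhom (rh l) (hrhsurj l) (hrhker l) K (hend l))
    fun l => (finrank_linearMap_eq_sum_card_standard_factor hinj hcq hc hc0 hcl).symm.trans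
      (finrank_linearMap_eq_sum_card_standard_factor hinj hc'q hc' hc'0 hc'l)
  refine ⟨?_, congrFun hmult⟩
  rw [length_eq_sum_card_standard_factor hinj hcq, length_eq_sum_card_standard_factor hinj hc'q,
    hmult]

/-- under the highest-weight axioms, the multiplicities in a
Δ-filtration are well-defined: two Δ-filtrations of the same module have, for each
`λ`, the same number of successive quotients isomorphic to `Δ(λ)`; in particular
they have the same length. -/
theorem stmt16 (K A : Type) [Field K] [Ring A] [Algebra K A] [FiniteDimensional K A]
    (Λ : Type) [Fintype Λ] [PartialOrder Λ]
    (L : Λ → Type) [∀ l, AddCommGroup (L l)] [∀ l, Module A (L l)]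
    [∀ l, Module.Finite A (L l)]
    (Δ : Λ → Type) [∀ l, AddCommGroup (Δ l)] [∀ l, Module A (Δ l)]
    [∀ l, Module.Finite A (Δ l)]
    (P : Λ → Type) [∀ l, AddCommGroup (P l)] [∀ l, Module A (P l)]
    [∀ l, Module.Finite A (P l)]
    -- the simple modules `L λ`, pairwise non-isomorphic, exhausting all simples
    (hsimple : ∀ l, IsSimpleModule A (L l))
    (hdistinct : ∀ l m, l ≠ m → IsEmpty (L l ≃ₗ[A] L m))
    (hall : ∀ (M : Type) [AddCommGroup M] [Module A M] [Module.Finite A M],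
      IsSimpleModule A M → ∃ l, Nonempty (M ≃ₗ[A] L l))
    -- axiom (1)
    (hhom : ∀ l m, ¬ l ≤ m → ∀ f : Δ l →ₗ[A] Δ m, f = 0)
    -- axiom (2): endomorphisms of `Δ λ` are scalars from `K`
    (hend : ∀ l (f : Δ l →ₗ[A] Δ l), ∃ c : K, ∀ x, f x = algebraMap K A c • x)
    -- axiom (3): projective covers `P λ ↠ L λ` and surjections `P λ ↠ Δ λ` with
    -- kernel filtered by `Δ ν`, `ν > λ`
    (hproj : ∀ l, Module.Projective A (P l))
    (pr : ∀ l, P l →ₗ[A] L l)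
    (hprsurj : ∀ l, Function.Surjective (pr l))
    (hprcover : ∀ l (N : Submodule A (P l)), Submodule.map (pr l) N = ⊤ → N = ⊤)
    (rh : ∀ l, P l →ₗ[A] Δ l)
    (hrhsurj : ∀ l, Function.Surjective (rh l))
    (hrhker : ∀ l, HasFilt A Δ {ν | l < ν} ↥(LinearMap.ker (rh l)))
    (M : Type) [AddCommGroup M] [Module A M] [Module.Finite A M]
    (r s : ℕ) (c : Fin (r + 1) → Submodule A M) (c' : Fin (s + 1) → Submodule A M)
    (hc : Monotone c) (hc0 : c 0 = ⊥) (hcl : c (Fin.last r) = ⊤)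
    (hcq : ∀ k : Fin r, ∃ μ, Nonempty (Subquot (c k.castSucc) (c k.succ) ≃ₗ[A] Δ μ))
    (hc' : Monotone c') (hc'0 : c' 0 = ⊥) (hc'l : c' (Fin.last s) = ⊤)
    (hc'q : ∀ k : Fin s, ∃ μ, Nonempty (Subquot (c' k.castSucc) (c' k.succ) ≃ₗ[A] Δ μ)) :
    r = s ∧
    ∀ l : Λ,
      Nat.card {k : Fin r // Nonempty (Subquot (c k.castSucc) (c k.succ) ≃ₗ[A] Δ l)} =
      Nat.card {k : Fin s // Nonempty (Subquot (c' k.castSucc) (c' k.succ) ≃ₗ[A] Δ l)} :=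
  stmt16_general K A Λ L Δ P hsimple hdistinct hhom hend hproj pr hprsurj hprcover rh hrhsurj hrhker
    M r s c c' hc hc0 hcl hcq hc' hc'0 hc'l hc'q
end

section
/- Under the highest-weight axioms, if 0 → L → M → N → 0 is a short exact sequence of A-modules and both M and N admit Δ-filtrations, then L admits a Δ-filtration. -/
section Subquotient
variable {A M M' : Type} [Ring A] [AddCommGroup M] [Module A M] [AddCommGroup M'] [Module A M']

noncomputable def Subquot.equivMapMkQ (p q : Submodule A M) :
    Subquot p q ≃ₗ[A] q.map p.mkQ :=
  let θ : q →ₗ[A] M ⧸ p := p.mkQ ∘ₗ q.subtype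
  have hker : p.comap q.subtype = LinearMap.ker θ := by
    rw [LinearMap.ker_comp, Submodule.ker_mkQ]
  have hrange : LinearMap.range θ = q.map p.mkQ := by
    rw [LinearMap.range_comp, Submodule.range_subtype]
  (Submodule.quotEquivOfEq _ _ hker).trans (θ.quotKerEquivRange.trans (.ofEq _ _ hrange))

noncomputable def Subquot.comapEquivOfSurjective (φ : M' →ₗ[A] M) (hφ : Function.Surjective φ)
    (a b : Submodule A M) : Subquot (a.comap φ) (b.comap φ) ≃ₗ[A] Subquot a b :=
  let ψ : b.comap φ →ₗ[A] Subquot a b := (a.comap b.subtype).mkQ ∘ₗ φ.restrict fun _ hx => hx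
  have hker : LinearMap.ker ψ = (a.comap φ).comap (b.comap φ).subtype := by
    ext x
    simp [ψ]
  have hsurj : Function.Surjective ψ := by
    intro z
    obtain ⟨y, rfl⟩ := Submodule.mkQ_surjective _ z
    obtain ⟨x, hx⟩ := hφ y
    exact ⟨⟨x, by simp [hx]⟩, congrArg (a.comap b.subtype).mkQ (Subtype.ext hx)⟩
  (Submodule.quotEquivOfEq _ _ hker.symm).trans (ψ.quotKerEquivOfSurjective hsurj)

noncomputable def Subquot.botEquiv (q : Submodule A M) : Subquot ⊥ q ≃ₗ[A] q :=
  Submodule.quotEquivOfEqBot _ (by rw [Submodule.comap_bot, Submodule.ker_subtype])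

end Subquotient

def FiltBy (A : Type) [Ring A] {Λ : Type} (Δ : Λ → Type)
    [∀ l, AddCommGroup (Δ l)] [∀ l, Module A (Δ l)] :
    List Λ → (M : Type) → [AddCommGroup M] → [Module A M] → Prop
  | [] => fun M _ _ => Subsingleton M
  | μ :: t => fun M _ _ => ∃ p : Submodule A M, Nonempty (p ≃ₗ[A] Δ μ) ∧ FiltBy A Δ t (M ⧸ p)

section FiltBy
variable {A : Type} [Ring A] {Λ : Type} {Δ : Λ → Type}
  [∀ l, AddCommGroup (Δ l)] [∀ l, Module A (Δ l)]
  {M M' : Type} [AddCommGroup M] [Module A M] [AddCommGroup M'] [Module A M']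

theorem FiltBy.congr {l : List Λ} (h : FiltBy A Δ l M) (e : M ≃ₗ[A] M') : FiltBy A Δ l M' := by
  induction l generalizing M M' with
  | nil => exact @Equiv.subsingleton _ _ e.symm.toEquiv h
  | cons μ t ih =>
    obtain ⟨p, ⟨ep⟩, hq⟩ := h
    exact ⟨p.map (e : M →ₗ[A] M'), ⟨(e.submoduleMap p).symm.trans ep⟩,
      ih hq (Submodule.Quotient.equiv p _ e rfl)⟩

theorem filtBy_singleton_iff {μ : Λ} : FiltBy A Δ [μ] M ↔ Nonempty (M ≃ₗ[A] Δ μ) := by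
  constructor
  · rintro ⟨p, ⟨ep⟩, hq⟩
    have hp : p = ⊤ := Submodule.Quotient.subsingleton_iff.mp hq
    exact ⟨(LinearEquiv.ofTop p hp).symm.trans ep⟩
  · rintro ⟨e⟩
    exact ⟨⊤, ⟨Submodule.topEquiv.trans e⟩, Submodule.Quotient.subsingleton_iff.mpr rfl⟩

theorem filtBy_cons_of_le {μ : Λ} {l : List Λ} {p q : Submodule A M} (hpq : p ≤ q)
    (ep : p ≃ₗ[A] Δ μ) (h : FiltBy A Δ l (q.map p.mkQ)) : FiltBy A Δ (μ :: l) q :=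
  ⟨p.comap q.subtype, ⟨(Submodule.comapSubtypeEquivOfLe hpq).trans ep⟩,
    h.congr (Subquot.equivMapMkQ p q).symm⟩

theorem filtBy_append_iff {l₁ l₂ : List Λ} :
    FiltBy A Δ (l₁ ++ l₂) M ↔
      ∃ q : Submodule A M, FiltBy A Δ l₁ q ∧ FiltBy A Δ l₂ (M ⧸ q) := by
  induction l₁ generalizing M with
  | nil =>
    refine ⟨fun h => ⟨⊥, inferInstanceAs (Subsingleton (⊥ : Submodule A M)),
      h.congr (Submodule.quotEquivOfEqBot ⊥ rfl).symm⟩, ?_⟩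
    rintro ⟨q, hq, h⟩
    have : Subsingleton q := hq
    exact h.congr (Submodule.quotEquivOfEqBot q Submodule.eq_bot_of_subsingleton)
  | cons μ t ih =>
    constructor
    · rintro ⟨p, ⟨ep⟩, h⟩
      obtain ⟨q', hq', h'⟩ := ih.mp h
      have hpq : p ≤ q'.comap p.mkQ :=
        (Submodule.ker_mkQ p).ge.trans (LinearMap.ker_le_comap p.mkQ)
      have hq : (q'.comap p.mkQ).map p.mkQ = q' :=
        Submodule.map_comap_eq_of_surjective p.mkQ_surjective q'
      refine ⟨q'.comap p.mkQ, filtBy_cons_of_le hpq ep (hq'.congr (.ofEq _ _ hq.symm)), ?_⟩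
      exact h'.congr ((Submodule.quotEquivOfEq _ _ hq.symm).trans
        (Submodule.quotientQuotientEquivQuotient p _ hpq))
    · rintro ⟨q, ⟨p₀, ⟨ep₀⟩, hq⟩, h⟩
      set p := p₀.map q.subtype
      have hpq : p ≤ q := Submodule.map_subtype_le q p₀
      have hp₀ : p.comap q.subtype = p₀ :=
        Submodule.comap_map_eq_of_injective q.injective_subtype p₀
      refine ⟨p, ⟨(Submodule.equivMapOfInjective _ q.injective_subtype p₀).symm.trans ep₀⟩,
        ih.mpr ⟨q.map p.mkQ, ?_, ?_⟩⟩
      · exact hq.congr ((Submodule.quotEquivOfEq _ _ hp₀.symm).trans (Subquot.equivMapMkQ p q))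
      · exact h.congr (Submodule.quotientQuotientEquivQuotient p q hpq).symm

end FiltBy

section HasFilt
variable {A : Type} [Ring A] {Λ : Type} {Δ : Λ → Type}
  [∀ l, AddCommGroup (Δ l)] [∀ l, Module A (Δ l)] {S : Set Λ}

theorem HasFilt.exists_filtBy {M : Type} [AddCommGroup M] [Module A M] (h : HasFilt A Δ S M) :
    ∃ l : List Λ, (∀ μ ∈ l, μ ∈ S) ∧ FiltBy A Δ l M := by
  obtain ⟨r, c, hmono, h0, hr, hlay⟩ := h
  induction r generalizing M with
  | zero =>
    refine ⟨[], by simp, ?_⟩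
    exact (Submodule.subsingleton_iff A).mp (subsingleton_iff_bot_eq_top.mp (h0.symm.trans hr))
  | succ s ih =>
    set p := c (0 : Fin (s + 1)).succ
    have hlay₀ := hlay 0
    rw [Fin.castSucc_zero, h0] at hlay₀
    obtain ⟨μ₀, hμ₀, ⟨e₀⟩⟩ := hlay₀
    let c' : Fin (s + 1) → Submodule A (M ⧸ p) := fun k => (c k.succ).map p.mkQ
    have hc' : ∀ k, (c' k).comap p.mkQ = c k.succ := fun k => by
      rw [Submodule.comap_map_mkQ, sup_eq_right]
      exact hmono (Fin.succ_le_succ_iff.mpr (Fin.zero_le k))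
    have hlay' : ∀ k : Fin s,
        ∃ μ ∈ S, Nonempty (Subquot (c' k.castSucc) (c' k.succ) ≃ₗ[A] Δ μ) := by
      intro k
      obtain ⟨μ, hμ, ⟨e⟩⟩ := hlay k.succ
      have e' :=
        Subquot.comapEquivOfSurjective p.mkQ p.mkQ_surjective (c' k.castSucc) (c' k.succ)
      rw [hc', hc', Fin.succ_castSucc] at e'
      exact ⟨μ, hμ, ⟨e'.symm.trans e⟩⟩
    obtain ⟨l, hlS, hl⟩ := ih c'
      (fun i j hij => Submodule.map_mono (hmono (Fin.succ_le_succ_iff.mpr hij)))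
      (Submodule.mkQ_map_self p)
      (by simp only [c', Fin.succ_last, hr, Submodule.map_top, Submodule.range_mkQ]) hlay'
    refine ⟨μ₀ :: l, by simpa [hμ₀] using hlS, p, ⟨?_⟩, hl⟩
    exact (Subquot.botEquiv p).symm.trans e₀

theorem FiltBy.hasFilt {l : List Λ} {M : Type} [AddCommGroup M] [Module A M]
    (h : FiltBy A Δ l M) (hS : ∀ μ ∈ l, μ ∈ S) : HasFilt A Δ S M := by
  induction l generalizing M with
  | nil =>
    have : Subsingleton M := h
    exact ⟨0, fun _ => ⊥, monotone_const, rfl, Subsingleton.elim _ _, fun k => k.elim0⟩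
  | cons μ t ih =>
    obtain ⟨p, ⟨ep⟩, hq⟩ := h
    obtain ⟨r, c, hmono, h0, hr, hlay⟩ := ih hq fun ν hν => hS ν (List.mem_cons_of_mem μ hν)
    let c' : Fin (r + 1 + 1) → Submodule A M := Fin.cons ⊥ fun k => (c k).comap p.mkQ
    have hc'0 : c' 0 = ⊥ := Fin.cons_zero _ _
    have hc' : ∀ k, c' k.succ = (c k).comap p.mkQ := Fin.cons_succ _ _
    have hc'₁ : c' (Fin.succ 0) = p := by
      rw [hc', h0, Submodule.comap_bot, Submodule.ker_mkQ]
    refine ⟨r + 1, c', ?_, rfl, ?_, ?_⟩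
    · refine Fin.monotone_iff_le_succ.mpr fun i => ?_
      induction i using Fin.cases with
      | zero => exact bot_le
      | succ j => exact Submodule.comap_mono (hmono (Fin.castSucc_le_succ j))
    · rw [← Fin.succ_last, hc', hr, Submodule.comap_top]
    · intro k
      induction k using Fin.cases with
      | zero =>
        refine ⟨μ, hS μ List.mem_cons_self, ⟨?_⟩⟩
        rw [Fin.castSucc_zero, hc'0, hc'₁]
        exact (Subquot.botEquiv p).trans ep
      | succ j =>
        obtain ⟨ν, hν, ⟨e⟩⟩ := hlay j
        refine ⟨ν, hν, ⟨?_⟩⟩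
        rw [← Fin.succ_castSucc, hc', hc']
        exact (Subquot.comapEquivOfSurjective p.mkQ p.mkQ_surjective _ _).trans e

end HasFilt

section HomVanishing
variable {A : Type} [Ring A] {Λ : Type} {Δ : Λ → Type}
  [∀ l, AddCommGroup (Δ l)] [∀ l, Module A (Δ l)]
  {X Y : Type} [AddCommGroup X] [Module A X] [AddCommGroup Y] [Module A Y]

theorem FiltBy.linearMap_eq_zero_of_source {l : List Λ} (hX : FiltBy A Δ l X)
    (hl : ∀ ν ∈ l, ∀ h : Δ ν →ₗ[A] Y, h = 0) (f : X →ₗ[A] Y) : f = 0 := by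
  induction l generalizing X with
  | nil =>
    have : Subsingleton X := hX
    exact Subsingleton.elim _ _
  | cons μ t ih =>
    obtain ⟨p, ⟨ep⟩, hq⟩ := hX
    have hp : p ≤ LinearMap.ker f := by
      intro x hx
      have := hl μ List.mem_cons_self (f ∘ₗ p.subtype ∘ₗ ep.symm)
      simpa using LinearMap.congr_fun this (ep ⟨x, hx⟩)
    rw [← p.liftQ_mkQ f hp, ih hq (fun ν hν => hl ν (List.mem_cons_of_mem μ hν)) (p.liftQ f hp),
      LinearMap.zero_comp]

theorem FiltBy.linearMap_eq_zero_of_target {l : List Λ} (hY : FiltBy A Δ l Y)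
    (hl : ∀ ν ∈ l, ∀ h : X →ₗ[A] Δ ν, h = 0) (f : X →ₗ[A] Y) : f = 0 := by
  induction l generalizing Y with
  | nil =>
    have : Subsingleton Y := hY
    exact Subsingleton.elim _ _
  | cons μ t ih =>
    obtain ⟨p, ⟨ep⟩, hq⟩ := hY
    have hf : ∀ x, f x ∈ p := fun x => by
      simpa using LinearMap.congr_fun
        (ih hq (fun ν hν => hl ν (List.mem_cons_of_mem μ hν)) (p.mkQ ∘ₗ f)) x
    have hf' := hl μ List.mem_cons_self (ep.toLinearMap ∘ₗ f.codRestrict p hf)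
    ext x
    have : ep (f.codRestrict p hf x) = ep 0 := by simpa using LinearMap.congr_fun hf' x
    simpa using congrArg Subtype.val (ep.injective this)

theorem FiltBy.linearMap_eq_zero {lX lY : List Λ} (hX : FiltBy A Δ lX X) (hY : FiltBy A Δ lY Y)
    (h : ∀ ν ∈ lX, ∀ μ ∈ lY, ∀ g : Δ ν →ₗ[A] Δ μ, g = 0) (f : X →ₗ[A] Y) : f = 0 :=
  hX.linearMap_eq_zero_of_source
    (fun ν hν g => hY.linearMap_eq_zero_of_target (fun μ hμ => h ν hν μ hμ) g) f

end HomVanishing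

theorem isCompl_range_ker_of_leftInverse {A X Y : Type} [Ring A] [AddCommGroup X] [Module A X]
    [AddCommGroup Y] [Module A Y] {s : Y →ₗ[A] X} {π : X →ₗ[A] Y} (h : ∀ y, π (s y) = y) :
    IsCompl (LinearMap.range s) (LinearMap.ker π) := by
  constructor
  · rw [Submodule.disjoint_def]
    rintro _ ⟨y, rfl⟩ hy
    rw [LinearMap.mem_ker, h] at hy
    simp [hy]
  · rw [codisjoint_iff_le_sup]
    intro x _
    exact Submodule.mem_sup.mpr ⟨s (π x), ⟨π x, rfl⟩, x - s (π x), by simp [h], by abel⟩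

section Splitting
variable {A : Type} [Ring A] {Λ : Type} [PartialOrder Λ] {Δ : Λ → Type}
  [∀ l, AddCommGroup (Δ l)] [∀ l, Module A (Δ l)]

variable (A Δ) in
/-- The vanishing of `Ext¹(Δ μ, X)` for `X` filtered by `Δ ρ` with `¬ μ < ρ`, phrased as splitting
of surjections `X ↠ Δ μ`. -/
def StdSurjectionsSplit : Prop :=
  ∀ (μ : Λ) (l : List Λ) (X : Type) [AddCommGroup X] [Module A X], FiltBy A Δ l X →
    (∀ ρ ∈ l, ¬ μ < ρ) → ∀ π : X →ₗ[A] Δ μ, Function.Surjective π →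
      ∃ s : Δ μ →ₗ[A] X, ∀ d, π (s d) = d

theorem stdSurjectionsSplit_of_projective {P : Λ → Type} [∀ l, AddCommGroup (P l)]
    [∀ l, Module A (P l)]
    (hhom : ∀ l m, ¬ l ≤ m → ∀ f : Δ l →ₗ[A] Δ m, f = 0)
    (hproj : ∀ l, Module.Projective A (P l)) (rh : ∀ l, P l →ₗ[A] Δ l)
    (hrhsurj : ∀ l, Function.Surjective (rh l))
    (hrhker : ∀ l, HasFilt A Δ {ν | l < ν} (LinearMap.ker (rh l))) :
    StdSurjectionsSplit A Δ := by
  intro μ l X _ _ hX hl π hπ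
  obtain ⟨l₀, hl₀, hK⟩ := (hrhker μ).exists_filtBy
  obtain ⟨φ, hφ⟩ := Module.projective_lifting_property (h := hproj μ) π (rh μ) hπ
  have hφK : φ ∘ₗ (LinearMap.ker (rh μ)).subtype = 0 :=
    hK.linearMap_eq_zero hX
      (fun ν hν ρ hρ => hhom ν ρ fun hνρ => hl ρ hρ ((hl₀ ν hν).trans_le hνρ)) _
  have hle : LinearMap.ker (rh μ) ≤ LinearMap.ker φ := by
    rw [← Submodule.range_subtype (LinearMap.ker (rh μ)), LinearMap.range_le_ker_iff]
    exact hφK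
  refine ⟨(LinearMap.ker (rh μ)).liftQ φ hle ∘ₗ
    ((rh μ).quotKerEquivOfSurjective (hrhsurj μ)).symm.toLinearMap, fun d => ?_⟩
  obtain ⟨x, rfl⟩ := hrhsurj μ d
  rw [LinearMap.comp_apply, LinearEquiv.coe_coe, LinearMap.quotKerEquivOfSurjective_symm_apply,
    Submodule.liftQ_apply, ← LinearMap.comp_apply π φ, hφ]

variable {X : Type} [AddCommGroup X] [Module A X]

theorem FiltBy.pair_swap (hsplit : StdSurjectionsSplit A Δ) {a b : Λ} (hba : ¬ b < a)
    (h : FiltBy A Δ [a, b] X) : FiltBy A Δ [b, a] X := by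
  obtain ⟨p, ⟨ep⟩, hq⟩ := h
  obtain ⟨e⟩ := filtBy_singleton_iff.mp hq
  let π : X →ₗ[A] Δ b := e.toLinearMap ∘ₗ p.mkQ
  have hker : LinearMap.ker π = p := by
    rw [LinearEquiv.ker_comp, Submodule.ker_mkQ]
  obtain ⟨s, hs⟩ := hsplit b [a, b] X ⟨p, ⟨ep⟩, hq⟩ (by simp [hba])
    π (e.surjective.comp p.mkQ_surjective)
  refine ⟨LinearMap.range s, ⟨(LinearEquiv.ofInjective s (Function.LeftInverse.injective hs)).symm⟩,
    filtBy_singleton_iff.mpr ⟨?_⟩⟩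
  exact (Submodule.quotientEquivOfIsCompl _ _ (isCompl_range_ker_of_leftInverse hs)).trans
    ((LinearEquiv.ofEq _ _ hker).trans ep)

theorem FiltBy.swap (hsplit : StdSurjectionsSplit A Δ) {a b : Λ} (hba : ¬ b < a) {t : List Λ}
    (h : FiltBy A Δ (a :: b :: t) X) : FiltBy A Δ (b :: a :: t) X := by
  obtain ⟨q, hq, ht⟩ := filtBy_append_iff (l₁ := [a, b]).mp h
  exact filtBy_append_iff (l₁ := [b, a]).mpr ⟨q, hq.pair_swap hsplit hba, ht⟩

theorem FiltBy.exists_perm_cons_of_maximal (hsplit : StdSurjectionsSplit A Δ) {l : List Λ}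
    {a : Λ} (h : FiltBy A Δ l X) (ha : Maximal (· ∈ l) a) :
    ∃ l', l.Perm (a :: l') ∧ FiltBy A Δ (a :: l') X := by
  induction l generalizing X with
  | nil => exact absurd ha.prop List.not_mem_nil
  | cons x t ih =>
    by_cases hxa : x = a
    · subst hxa
      exact ⟨t, .rfl, h⟩
    obtain ⟨p, hp, hq⟩ := h
    have hat : a ∈ t := (List.mem_cons.mp ha.prop).resolve_left (Ne.symm hxa)
    obtain ⟨t', hperm, ht'⟩ := ih hq (ha.mono (fun _ => List.mem_cons_of_mem x) hat)
    exact ⟨x :: t', (hperm.cons x).trans (.swap a x t'),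
      FiltBy.swap hsplit (ha.not_gt List.mem_cons_self) ⟨p, hp, ht'⟩⟩

end Splitting

theorem bijective_of_eq_algebraMap_smul {K A D : Type} [Field K] [Ring A] [Algebra K A]
    [AddCommGroup D] [Module A D] {f : D →ₗ[A] D} (hf : ∃ c : K, ∀ x, f x = algebraMap K A c • x)
    (hf0 : f ≠ 0) : Function.Bijective f := by
  obtain ⟨c, hc⟩ := hf
  have hc0 : c ≠ 0 := by
    rintro rfl
    exact hf0 (LinearMap.ext fun x => by simp [hc])
  rw [show ⇑f = fun x => algebraMap K A c • x from funext hc]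
  exact ((isUnit_iff_ne_zero.mpr hc0).map (algebraMap K A)).smul_bijective

section Kernels
variable {K A : Type} [Field K] [Ring A] [Algebra K A] {Λ : Type} [PartialOrder Λ]
  {Δ : Λ → Type} [∀ l, AddCommGroup (Δ l)] [∀ l, Module A (Δ l)]
  {M N : Type} [AddCommGroup M] [Module A M] [AddCommGroup N] [Module A N]

theorem FiltBy.subsingleton_of_surjective (hhom : ∀ l m, ¬ l ≤ m → ∀ f : Δ l →ₗ[A] Δ m, f = 0)
    (hsplit : StdSurjectionsSplit A Δ) {l : List Λ} {μ : Λ} (hM : FiltBy A Δ l M)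
    (hl : ∀ ρ ∈ l, ¬ μ ≤ ρ) {π : M →ₗ[A] Δ μ} (hπ : Function.Surjective π) :
    Subsingleton (Δ μ) := by
  obtain ⟨s, hs⟩ := hsplit μ l M hM (fun ρ hρ hμρ => hl ρ hρ hμρ.le) π hπ
  have hs0 : s = 0 := hM.linearMap_eq_zero_of_target (fun ρ hρ => hhom μ ρ (hl ρ hρ)) s
  exact ⟨fun d d' => by rw [← hs d, ← hs d', hs0, LinearMap.zero_apply, LinearMap.zero_apply]⟩

theorem FiltBy.exists_filtBy_ker_std
    (hhom : ∀ l m, ¬ l ≤ m → ∀ f : Δ l →ₗ[A] Δ m, f = 0)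
    (hend : ∀ l (f : Δ l →ₗ[A] Δ l), ∃ c : K, ∀ x, f x = algebraMap K A c • x)
    (hsplit : StdSurjectionsSplit A Δ) {l : List Λ} (hM : FiltBy A Δ l M) {μ : Λ}
    (π : M →ₗ[A] Δ μ) (hπ : Function.Surjective π) :
    ∃ l', FiltBy A Δ l' (LinearMap.ker π) := by
  induction hn : l.length using Nat.strong_induction_on generalizing l M with
  | _ n ih =>
    obtain rfl | hne := eq_or_ne l []
    · have : Subsingleton M := hM
      exact ⟨[], inferInstanceAs (Subsingleton (LinearMap.ker π))⟩
    obtain ⟨a, ha⟩ : ∃ a, Maximal (· ∈ l) a := by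
      classical
      simpa using l.toFinset.exists_maximal ((List.toFinset_nonempty_iff l).mpr hne)
    obtain ⟨l', hperm, p, ⟨ep⟩, hq⟩ := hM.exists_perm_cons_of_maximal hsplit ha
    have hlen : l'.length < n := by simp [← hn, hperm.length_eq]
    let h : Δ a →ₗ[A] Δ μ := π ∘ₗ p.subtype ∘ₗ ep.symm.toLinearMap
    by_cases h0 : h = 0
    · have hp : p ≤ LinearMap.ker π := fun x hx => by
        simpa [h] using LinearMap.congr_fun h0 (ep ⟨x, hx⟩)
      obtain ⟨l₂, hl₂⟩ := ih _ hlen hq (p.liftQ π hp)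
        (fun d => (hπ d).imp' p.mkQ fun x hx => by simpa using hx) rfl
      exact ⟨a :: l₂, filtBy_cons_of_le hp ep (hl₂.congr (.ofEq _ _ (p.ker_liftQ π hp)))⟩
    -- A nonzero `Δ a → Δ μ` forces `a ≤ μ`; maximality of `a` excludes `a < μ`.
    have haμ : a = μ := by
      refine (not_not.mp fun hle => h0 (hhom a μ hle h)).eq_of_not_lt fun hlt => h0 ?_
      have := hM.subsingleton_of_surjective hhom hsplit
        (fun ρ hρ hμρ => ha.not_gt hρ (hlt.trans_le hμρ)) hπ
      exact Subsingleton.elim _ _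
    subst haμ
    let e := LinearEquiv.ofBijective h (bijective_of_eq_algebraMap_smul (hend a h) h0)
    let s : Δ a →ₗ[A] M := p.subtype ∘ₗ ep.symm.toLinearMap ∘ₗ e.symm.toLinearMap
    have hrange : LinearMap.range s = p := by
      simp [s, LinearMap.range_comp]
    exact ⟨l', hq.congr ((Submodule.quotEquivOfEq _ _ hrange.symm).trans
      (Submodule.quotientEquivOfIsCompl _ _ (isCompl_range_ker_of_leftInverse e.apply_symm_apply)))⟩

theorem FiltBy.exists_filtBy_ker
    (hhom : ∀ l m, ¬ l ≤ m → ∀ f : Δ l →ₗ[A] Δ m, f = 0)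
    (hend : ∀ l (f : Δ l →ₗ[A] Δ l), ∃ c : K, ∀ x, f x = algebraMap K A c • x)
    (hsplit : StdSurjectionsSplit A Δ) {lM lN : List Λ} (hM : FiltBy A Δ lM M)
    (hN : FiltBy A Δ lN N) (g : M →ₗ[A] N) (hg : Function.Surjective g) :
    ∃ l, FiltBy A Δ l (LinearMap.ker g) := by
  induction lN generalizing N with
  | nil =>
    have : Subsingleton N := hN
    have hker : LinearMap.ker g = ⊤ := eq_top_iff.mpr fun x _ => Subsingleton.elim _ _
    exact ⟨lM, hM.congr (LinearEquiv.ofTop _ hker).symm⟩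
  | cons μ t ih =>
    obtain ⟨p, ⟨ep⟩, hq⟩ := hN
    obtain ⟨l₁, hl₁⟩ := ih hq (p.mkQ ∘ₗ g) (p.mkQ_surjective.comp hg)
    have hres : ∀ x ∈ LinearMap.ker (p.mkQ ∘ₗ g), g x ∈ p := fun x hx => by simpa using hx
    let π := ep.toLinearMap ∘ₗ g.restrict hres
    have hπ : Function.Surjective π := fun d => by
      obtain ⟨x, hx⟩ := hg (ep.symm d)
      exact ⟨⟨x, by simp [hx]⟩, by simp [π, LinearMap.restrict_apply, hx]⟩
    have hker : LinearMap.ker π = (LinearMap.ker g).comap (LinearMap.ker (p.mkQ ∘ₗ g)).subtype := by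
      rw [LinearEquiv.ker_comp, LinearMap.ker_restrict]
    obtain ⟨l₂, hl₂⟩ := hl₁.exists_filtBy_ker_std hhom hend hsplit π hπ
    exact ⟨l₂, hl₂.congr ((LinearEquiv.ofEq _ _ hker).trans
      (Submodule.comapSubtypeEquivOfLe (LinearMap.ker_le_ker_comp g p.mkQ)))⟩

end Kernels

theorem stmt17_general (K A : Type) [Field K] [Ring A] [Algebra K A]
    (Λ : Type) [PartialOrder Λ]
    (Δ : Λ → Type) [∀ l, AddCommGroup (Δ l)] [∀ l, Module A (Δ l)]
    (P : Λ → Type) [∀ l, AddCommGroup (P l)] [∀ l, Module A (P l)]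
    -- axiom (1)
    (hhom : ∀ l m, ¬ l ≤ m → ∀ f : Δ l →ₗ[A] Δ m, f = 0)
    -- axiom (2): endomorphisms of `Δ λ` are scalars from `K`
    (hend : ∀ l (f : Δ l →ₗ[A] Δ l), ∃ c : K, ∀ x, f x = algebraMap K A c • x)
    -- axiom (3): projective covers `P λ ↠ L λ` and surjections `P λ ↠ Δ λ` with
    -- kernel filtered by `Δ ν`, `ν > λ`
    (hproj : ∀ l, Module.Projective A (P l))
    (rh : ∀ l, P l →ₗ[A] Δ l)
    (hrhsurj : ∀ l, Function.Surjective (rh l))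
    (hrhker : ∀ l, HasFilt A Δ {ν | l < ν} ↥(LinearMap.ker (rh l)))
    (L₀ M N : Type) [AddCommGroup L₀] [Module A L₀]
    [AddCommGroup M] [Module A M]
    [AddCommGroup N] [Module A N]
    (f : L₀ →ₗ[A] M) (g : M →ₗ[A] N)
    (hf : Function.Injective f) (hg : Function.Surjective g)
    (hexact : LinearMap.range f = LinearMap.ker g)
    (hM : HasFilt A Δ Set.univ M) (hN : HasFilt A Δ Set.univ N) :
    HasFilt A Δ Set.univ L₀ := by
  have hsplit := stdSurjectionsSplit_of_projective hhom hproj rh hrhsurj hrhker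
  obtain ⟨lM, -, hMl⟩ := hM.exists_filtBy
  obtain ⟨lN, -, hNl⟩ := hN.exists_filtBy
  obtain ⟨l, hl⟩ := hMl.exists_filtBy_ker hhom hend hsplit hNl g hg
  have e : L₀ ≃ₗ[A] LinearMap.ker g := (LinearEquiv.ofInjective f hf).trans (.ofEq _ _ hexact)
  exact (hl.congr e.symm).hasFilt fun _ _ => trivial

/-- under the highest-weight axioms, in a short exact sequence
`0 → L₀ → M → N → 0`, if `M` and `N` admit Δ-filtrations then so does `L₀`. -/
theorem stmt17 (K A : Type) [Field K] [Ring A] [Algebra K A] [FiniteDimensional K A]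
    (Λ : Type) [Fintype Λ] [PartialOrder Λ]
    (L : Λ → Type) [∀ l, AddCommGroup (L l)] [∀ l, Module A (L l)]
    [∀ l, Module.Finite A (L l)]
    (Δ : Λ → Type) [∀ l, AddCommGroup (Δ l)] [∀ l, Module A (Δ l)]
    [∀ l, Module.Finite A (Δ l)]
    (P : Λ → Type) [∀ l, AddCommGroup (P l)] [∀ l, Module A (P l)]
    [∀ l, Module.Finite A (P l)]
    -- the simple modules `L λ`, pairwise non-isomorphic, exhausting all simples
    (hsimple : ∀ l, IsSimpleModule A (L l))
    (hdistinct : ∀ l m, l ≠ m → IsEmpty (L l ≃ₗ[A] L m))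
    (hall : ∀ (M : Type) [AddCommGroup M] [Module A M] [Module.Finite A M],
      IsSimpleModule A M → ∃ l, Nonempty (M ≃ₗ[A] L l))
    -- axiom (1)
    (hhom : ∀ l m, ¬ l ≤ m → ∀ f : Δ l →ₗ[A] Δ m, f = 0)
    -- axiom (2): endomorphisms of `Δ λ` are scalars from `K`
    (hend : ∀ l (f : Δ l →ₗ[A] Δ l), ∃ c : K, ∀ x, f x = algebraMap K A c • x)
    -- axiom (3): projective covers `P λ ↠ L λ` and surjections `P λ ↠ Δ λ` with
    -- kernel filtered by `Δ ν`, `ν > λ`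
    (hproj : ∀ l, Module.Projective A (P l))
    (pr : ∀ l, P l →ₗ[A] L l)
    (hprsurj : ∀ l, Function.Surjective (pr l))
    (hprcover : ∀ l (N : Submodule A (P l)), Submodule.map (pr l) N = ⊤ → N = ⊤)
    (rh : ∀ l, P l →ₗ[A] Δ l)
    (hrhsurj : ∀ l, Function.Surjective (rh l))
    (hrhker : ∀ l, HasFilt A Δ {ν | l < ν} ↥(LinearMap.ker (rh l)))
    (L₀ M N : Type) [AddCommGroup L₀] [Module A L₀] [Module.Finite A L₀]
    [AddCommGroup M] [Module A M] [Module.Finite A M]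
    [AddCommGroup N] [Module A N] [Module.Finite A N]
    (f : L₀ →ₗ[A] M) (g : M →ₗ[A] N)
    (hf : Function.Injective f) (hg : Function.Surjective g)
    (hexact : LinearMap.range f = LinearMap.ker g)
    (hM : HasFilt A Δ Set.univ M) (hN : HasFilt A Δ Set.univ N) :
    HasFilt A Δ Set.univ L₀ :=
  stmt17_general K A Λ Δ P hhom hend hproj rh hrhsurj hrhker L₀ M N f g hf hg hexact hM hN
end
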